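/- arXiv:0812.2519 — 7 statements merged into one kernel-verified Lean document; each statement's English description precedes it below -/
import Mathlib

section
/- Let D' be a pretriangulated category and let D ⊆ D' be a left-admissible full triangulated subcategory. Then the inclusion functor ^⊥D ↪ D' of the left orthogonal admits a right adjoint R : D' → ^⊥D; the restriction of R to the right orthogonal D^⊥ is a fully faithful functor D^⊥ → ^⊥D; and this restriction is an equivalence of categories if and only if D is right admissible in D'. -/
/-!
STATEMENT 0: Let D' be a pretriangulated category and let D ⊆ D' be a left-admissible full
triangulated subcategory. Then the inclusion functor `^⊥D ↪ D'` of the left orthogonal admits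
a right adjoint `R : D' → ^⊥D`; the restriction of `R` to the right orthogonal `D^⊥` is a
fully faithful functor `D^⊥ → ^⊥D`; and this restriction is an equivalence of categories if
and only if `D` is right admissible in `D'`.
-/

open CategoryTheory Limits CategoryTheory.Pretriangulated

/-- The left orthogonal `^⊥D` of a (full triangulated) subcategory given by an object
predicate `P`: objects `M` with `Hom(M, N) = 0` for every `N` satisfying `P`. -/
def leftOrthogonal {D' : Type*} [Category D'] [Preadditive D'] (P : D' → Prop) :
    D' → Prop :=
  fun M => ∀ (N : D'), P N → ∀ f : M ⟶ N, f = 0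

/-- The right orthogonal `D^⊥` of a (full triangulated) subcategory given by an object
predicate `P`: objects `M` with `Hom(N, M) = 0` for every `N` satisfying `P`. -/
def rightOrthogonal {D' : Type*} [Category D'] [Preadditive D'] (P : D' → Prop) :
    D' → Prop :=
  fun M => ∀ (N : D'), P N → ∀ f : N ⟶ M, f = 0

/-! A left adjoint `L` of `D ↪ D'` puts every `M` in a triangle `K → M → L M → K⟦1⟧` with
`K ∈ ⊥D`. The map `K → M` is the coreflection of `M` into `⊥D`, and since its cone lies in `D`,
precomposition with it is bijective on maps into `D⊥`: this makes `R` fully faithful on `D⊥`.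
A right adjoint `ρ` of `D ↪ D'` gives triangles `ρ Y → Y → B → (ρ Y)⟦1⟧` with `B ∈ D⊥`; the
cone of `Y → B` lies in `D`, so for `Y ∈ ⊥D` this map is the coreflection of `B` and `R B ≅ Y`.
Conversely, if `R B ≅ R M` with `B ∈ D⊥`, the corresponding `u : M → B` has its fibre `N` in
`⊥(D⊥)`; objects of `⊥D ∩ ⊥(D⊥)` vanish when `R` is essentially surjective on `D⊥`, so
`N ≅ L N ∈ D`, and `N → M` is the coreflection of `M` into `D`. -/

lemma leftOrthogonal_eq {C : Type*} [Category C] [Preadditive C] (P : ObjectProperty C) :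
    leftOrthogonal P = P.leftOrthogonal := by
  ext M
  exact ⟨fun h N f hN => h N hN f, fun h N hN f => h f hN⟩

lemma rightOrthogonal_eq {C : Type*} [Category C] [Preadditive C] (P : ObjectProperty C) :
    rightOrthogonal P = P.rightOrthogonal := by
  ext M
  exact ⟨fun h N f hN => h N hN f, fun h N hN f => h f hN⟩

lemma CategoryTheory.Adjunction.map_bijective_of_isLocal_counit_app {C D : Type*} [Category C]
    [Category D] {F : C ⥤ D} {G : D ⥤ C} (adj : F ⊣ G) {Q : ObjectProperty D}
    (hQ : ∀ ⦃B⦄, Q B → Q.isLocal (adj.counit.app B)) (B B' : Q.FullSubcategory) :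
    Function.Bijective ((Q.ι ⋙ G).map : (B ⟶ B') → _) := by
  have : (Q.ι ⋙ G).map = adj.homEquiv _ _ ∘ (fun f => adj.counit.app B.obj ≫ f) ∘
      (Q.fullyFaithfulι.homEquiv (X := B) (Y := B')) := by
    funext f
    simp [Functor.FullyFaithful.homEquiv, Adjunction.homEquiv_unit]
  rw [this]
  exact (adj.homEquiv _ _).bijective.comp
    ((hQ B.property B'.obj B'.property).comp Q.fullyFaithfulι.homEquiv.bijective)

namespace CategoryTheory.ObjectProperty

section Coreflection

variable {C : Type*} [Category C] (P : ObjectProperty C)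

lemma isLeftAdjoint_ι_of_isColocal (h : ∀ M : C, ∃ (K : C) (ε : K ⟶ M), P K ∧ P.isColocal ε) :
    P.ι.IsLeftAdjoint := by
  refine Functor.isLeftAdjoint_of_rightAdjointObjIsDefined_eq_top (top_unique fun M _ => ?_)
  obtain ⟨K, ε, hK, hε⟩ := h M
  exact Functor.RepresentableBy.isRepresentable (Y := ⟨K, hK⟩)
    { homEquiv := fun {X} =>
        P.fullyFaithfulι.homEquiv.trans (isColocal.homEquiv hε X.obj X.property)
      homEquiv_comp := fun f g => by simp [Functor.FullyFaithful.homEquiv] }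

variable {P} in
lemma isColocal.exists_iso {Y Y' Z : C} {g : Y ⟶ Z} {g' : Y' ⟶ Z} (hg : P.isColocal g)
    (hg' : P.isColocal g') (hY : P Y) (hY' : P Y') : ∃ e : Y ≅ Y', e.hom ≫ g' = g := by
  obtain ⟨φ, hφ⟩ := (hg' Y hY).surjective g
  have hφ' : P.isColocal (φ ≫ g') := by rwa [← hφ] at hg
  have : IsIso φ := (P.isColocal_iff_isIso φ hY hY').1 (P.isColocal.of_postcomp φ g' hg' hφ')
  exact ⟨asIso φ, hφ⟩

lemma isColocal_counit_app {R : C ⥤ P.FullSubcategory} (adj : P.ι ⊣ R) (M : C) :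
    P.isColocal (adj.counit.app M) :=
  fun X hX => isColocal_adj_counit_app adj M X ⟨⟨X, hX⟩, rfl⟩

lemma isLocal_unit_app {L : C ⥤ P.FullSubcategory} (adj : L ⊣ P.ι) (M : C) :
    P.isLocal (adj.unit.app M) :=
  fun X hX => isLocal_adj_unit_app adj M X ⟨⟨X, hX⟩, rfl⟩

variable [HasZeroMorphisms C]

lemma le_leftOrthogonal_rightOrthogonal : P ≤ P.rightOrthogonal.leftOrthogonal :=
  fun _ hX _ f hY => hY f hX

variable {P} in
lemma isZero_of_essSurj {Q : ObjectProperty C} {R : C ⥤ P.FullSubcategory} (adj : P.ι ⊣ R)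
    [(Q.ι ⋙ R).EssSurj] {X : C} (hP : P X) (hQ : Q.leftOrthogonal X) : IsZero X := by
  let B := (Q.ι ⋙ R).objPreimage ⟨X, hP⟩
  let e : R.obj B.obj ≅ ⟨X, hP⟩ := (Q.ι ⋙ R).objObjPreimageIso ⟨X, hP⟩
  have he : e.inv.hom = 0 := (P.isColocal_counit_app adj B.obj X hP).injective
    (by simpa using hQ (e.inv.hom ≫ adj.counit.app B.obj) B.property)
  rw [IsZero.iff_id_eq_zero]
  calc 𝟙 X = (e.inv ≫ e.hom).hom := by simp
    _ = 0 := by rw [InducedCategory.comp_hom, he, zero_comp]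

end Coreflection

section Shift

variable {C : Type*} [Category C] [HasShift C ℤ] (P : ObjectProperty C) [P.IsStableUnderShift ℤ]

lemma isLocal_shift {X Y : C} {f : X ⟶ Y} (hf : P.isLocal f) (n : ℤ) : P.isLocal (f⟦n⟧') := by
  intro Z hZ
  let e W := (shiftEquiv C n).toAdjunction.homEquiv W Z
  have : (fun g : Y⟦n⟧ ⟶ Z => f⟦n⟧' ≫ g) = (e X).symm ∘ (fun g => f ≫ g) ∘ e Y := by
    funext g
    exact (congrArg (f⟦n⟧' ≫ ·) (Equiv.symm_apply_apply (e Y) g)).symm.trans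
      ((shiftEquiv C n).toAdjunction.homEquiv_naturality_left_symm f _).symm
  rw [this]
  exact (e X).symm.bijective.comp ((hf _ (P.le_shift (-n) Z hZ)).comp (e Y).bijective)

lemma isColocal_shift {X Y : C} {f : X ⟶ Y} (hf : P.isColocal f) (n : ℤ) :
    P.isColocal (f⟦n⟧') := by
  intro Z hZ
  let e W := (shiftEquiv C n).symm.toAdjunction.homEquiv Z W
  have : (fun g : Z ⟶ X⟦n⟧ => g ≫ f⟦n⟧') = e Y ∘ (fun g => g ≫ f) ∘ (e X).symm := by
    funext g
    exact (congrArg (· ≫ f⟦n⟧') (Equiv.apply_symm_apply (e X) g)).symm.trans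
      ((shiftEquiv C n).symm.toAdjunction.homEquiv_naturality_right _ f).symm
  rw [this]
  exact (e Y).bijective.comp ((hf _ (P.le_shift (-n) Z hZ)).comp (e X).symm.bijective)

end Shift

section Triangles

variable {C : Type*} [Category C] [HasZeroObject C] [HasShift C ℤ] [Preadditive C]
  [∀ n : ℤ, (shiftFunctor C n).Additive] [Pretriangulated C]
  (P : ObjectProperty C) [P.IsStableUnderShift ℤ] {T : Triangle C} (hT : T ∈ distTriang C)
include hT

lemma leftOrthogonal_obj₃_of_isLocal (h : P.isLocal T.mor₁) : P.leftOrthogonal T.obj₃ := by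
  intro W f hW
  have h₂ : T.mor₂ ≫ f = 0 :=
    (h W hW).injective (by simp [reassoc_of% comp_distTriang_mor_zero₁₂ T hT])
  obtain ⟨g, rfl⟩ := Triangle.yoneda_exact₃ T hT f h₂
  obtain ⟨k, rfl⟩ := (P.isLocal_shift h 1 W hW).surjective g
  simp [reassoc_of% comp_distTriang_mor_zero₃₁ T hT]

lemma leftOrthogonal_obj₁_of_isLocal (h : P.isLocal T.mor₂) : P.leftOrthogonal T.obj₁ :=
  (P.leftOrthogonal.prop_shift_iff_of_isStableUnderShift T.obj₁ (1 : ℤ)).1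
    (P.leftOrthogonal_obj₃_of_isLocal (rot_of_distTriang T hT) h)

lemma rightOrthogonal_obj₃_of_isColocal (h : P.isColocal T.mor₁) : P.rightOrthogonal T.obj₃ := by
  intro W f hW
  have h₃ : f ≫ T.mor₃ = 0 :=
    (P.isColocal_shift h 1 W hW).injective (by simp [comp_distTriang_mor_zero₃₁ T hT])
  obtain ⟨g, rfl⟩ := Triangle.coyoneda_exact₃ T hT f h₃
  obtain ⟨k, rfl⟩ := (h W hW).surjective g
  simp [comp_distTriang_mor_zero₁₂ T hT]

end Triangles

section Admissible

variable {C : Type*} [Category C] [HasZeroObject C] [HasShift C ℤ] [Preadditive C]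
  [∀ n : ℤ, (shiftFunctor C n).Additive] [Pretriangulated C] (S : ObjectProperty C)
  [S.IsTriangulated]

lemma trW_le_isColocal_leftOrthogonal : S.trW ≤ S.leftOrthogonal.isColocal := by
  rw [le_isColocal_iff, isColocal_trW]

lemma trW_le_isLocal_rightOrthogonal : S.trW ≤ S.rightOrthogonal.isLocal := by
  rw [le_isLocal_iff, isLocal_trW]

lemma exists_trW_of_leftOrthogonal {L : C ⥤ S.FullSubcategory} (adj : L ⊣ S.ι) (M : C) :
    ∃ (K : C) (ε : K ⟶ M), S.leftOrthogonal K ∧ S.trW ε := by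
  obtain ⟨K, ε, δ, hT⟩ := distinguished_cocone_triangle₁ (adj.unit.app M)
  exact ⟨K, ε, S.leftOrthogonal_obj₁_of_isLocal hT (S.isLocal_unit_app adj M),
    trW.mk S hT (L.obj M).property⟩

lemma isLeftAdjoint_ι_leftOrthogonal [S.ι.IsRightAdjoint] : S.leftOrthogonal.ι.IsLeftAdjoint := by
  refine isLeftAdjoint_ι_of_isColocal _ fun M => ?_
  obtain ⟨K, ε, hK, hε⟩ := S.exists_trW_of_leftOrthogonal (Adjunction.ofIsRightAdjoint S.ι) M
  exact ⟨K, ε, hK, S.trW_le_isColocal_leftOrthogonal _ hε⟩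

variable {S} {R : C ⥤ S.leftOrthogonal.FullSubcategory} (adj : S.leftOrthogonal.ι ⊣ R)
include adj

lemma essSurj_of_isLeftAdjoint [S.ι.IsLeftAdjoint] : (S.rightOrthogonal.ι ⋙ R).EssSurj := by
  refine ⟨fun Y => ?_⟩
  let adj' := Adjunction.ofIsLeftAdjoint S.ι
  obtain ⟨B, g, h, hT⟩ := distinguished_cocone_triangle (adj'.counit.app Y.obj)
  have hB : S.rightOrthogonal B :=
    S.rightOrthogonal_obj₃_of_isColocal hT (S.isColocal_counit_app adj' Y.obj)
  have hg : S.trW g := trW.mk' S hT (Functor.rightAdjoint S.ι |>.obj Y.obj).property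
  obtain ⟨e, -⟩ := (isColocal_counit_app _ adj B).exists_iso
    (S.trW_le_isColocal_leftOrthogonal _ hg) (R.obj B).property Y.property
  exact ⟨⟨B, hB⟩, ⟨isoMk _ e⟩⟩

lemma isIso_unit_app_of_leftOrthogonal_rightOrthogonal [(S.rightOrthogonal.ι ⋙ R).EssSurj]
    {L : C ⥤ S.FullSubcategory} (adj' : L ⊣ S.ι) {N : C}
    (hN : S.rightOrthogonal.leftOrthogonal N) : IsIso (adj'.unit.app N) := by
  obtain ⟨K, ε, δ, hT⟩ := distinguished_cocone_triangle₁ (adj'.unit.app N)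
  have hε := S.trW_le_isLocal_rightOrthogonal _ (trW.mk S hT (L.obj N).property)
  have hK : S.rightOrthogonal.leftOrthogonal K := fun B f hB => by
    obtain ⟨g, rfl⟩ := (hε B hB).surjective f
    exact (congrArg (ε ≫ ·) (hN g hB)).trans comp_zero
  exact (Triangle.isZero₁_iff_isIso₂ _ hT).1 <| isZero_of_essSurj adj
    (S.leftOrthogonal_obj₁_of_isLocal hT (S.isLocal_unit_app adj' N)) hK

variable [S.ι.IsRightAdjoint]

lemma trW_counit_app (M : C) : S.trW (adj.counit.app M) := by
  obtain ⟨K, ε, hK, hε⟩ := S.exists_trW_of_leftOrthogonal (Adjunction.ofIsRightAdjoint S.ι) M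
  obtain ⟨e, rfl⟩ := (S.trW_le_isColocal_leftOrthogonal _ hε).exists_iso
    (isColocal_counit_app _ adj M) hK (R.obj M).property
  exact (S.trW.cancel_left_of_respectsIso _ _).1 hε

lemma isLocal_rightOrthogonal_counit_app (M : C) :
    S.rightOrthogonal.isLocal (adj.counit.app M) :=
  S.trW_le_isLocal_rightOrthogonal _ (trW_counit_app adj M)

lemma exists_isLocal_rightOrthogonal [(S.rightOrthogonal.ι ⋙ R).EssSurj] (M : C) :
    ∃ (B : C) (u : M ⟶ B), S.rightOrthogonal B ∧ S.rightOrthogonal.isLocal u := by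
  let B := (S.rightOrthogonal.ι ⋙ R).objPreimage (R.obj M)
  let e := S.leftOrthogonal.ι.mapIso ((S.rightOrthogonal.ι ⋙ R).objObjPreimageIso (R.obj M))
  have hc := isLocal_rightOrthogonal_counit_app adj
  obtain ⟨u, hu⟩ := (hc M B.obj B.property).surjective (e.inv ≫ adj.counit.app B.obj)
  refine ⟨B.obj, u, B.property, S.rightOrthogonal.isLocal.of_precomp _ _ (hc M) ?_⟩
  rw [show adj.counit.app M ≫ u = _ from hu]
  exact S.rightOrthogonal.isLocal.comp_mem _ _ (isLocal_of_isIso _ e.inv) (hc B.obj)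

lemma isLeftAdjoint_ι_of_essSurj [(S.rightOrthogonal.ι ⋙ R).EssSurj] : S.ι.IsLeftAdjoint := by
  refine isLeftAdjoint_ι_of_isColocal _ fun M => ?_
  let adj' := Adjunction.ofIsRightAdjoint S.ι
  obtain ⟨B, u, hB, hu⟩ := exists_isLocal_rightOrthogonal adj M
  obtain ⟨N, f, δ, hT⟩ := distinguished_cocone_triangle₁ u
  have hf : S.isColocal f := fun X hX => S.rightOrthogonal.trW_le_isColocal_leftOrthogonal _
    (trW.mk _ hT hB) X (S.le_leftOrthogonal_rightOrthogonal X hX)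
  have : IsIso (adj'.unit.app N) := isIso_unit_app_of_leftOrthogonal_rightOrthogonal adj adj'
    (S.rightOrthogonal.leftOrthogonal_obj₁_of_isLocal hT hu)
  exact ⟨_, inv (adj'.unit.app N) ≫ f, (Functor.leftAdjoint S.ι |>.obj N).property,
    S.isColocal.comp_mem _ _ (isColocal_of_isIso _ _) hf⟩

end Admissible

end CategoryTheory.ObjectProperty

theorem stmt0 {D' : Type u} [Category.{v} D'] [HasZeroObject D'] [HasShift D' ℤ]
    [Preadditive D'] [∀ n : ℤ, (shiftFunctor D' n).Additive] [Pretriangulated D']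
    (S : ObjectProperty D') [S.IsTriangulated]
    -- `D` is left admissible: the inclusion `D ↪ D'` admits a left adjoint,
    -- i.e. the inclusion is a right adjoint.
    (hadm : (ObjectProperty.ι S).IsRightAdjoint) :
    ∃ (R : D' ⥤ ObjectProperty.FullSubcategory (leftOrthogonal S))
      (_ : ObjectProperty.ι (leftOrthogonal S) ⊣ R),
      -- the restriction of `R` to the right orthogonal `D^⊥` is fully faithful ...
      (ObjectProperty.ι (rightOrthogonal S) ⋙ R).Full ∧
      (ObjectProperty.ι (rightOrthogonal S) ⋙ R).Faithful ∧
      -- ... and it is an equivalence iff `D` is right admissible (the inclusion `D ↪ D'`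
      -- admits a right adjoint, i.e. the inclusion is a left adjoint).
      ((ObjectProperty.ι (rightOrthogonal S) ⋙ R).IsEquivalence ↔
        (ObjectProperty.ι S).IsLeftAdjoint) := by
  rw [leftOrthogonal_eq, rightOrthogonal_eq]
  have := S.isLeftAdjoint_ι_leftOrthogonal
  let adj := Adjunction.ofIsLeftAdjoint S.leftOrthogonal.ι
  have hmap := adj.map_bijective_of_isLocal_counit_app
    fun B _ => ObjectProperty.isLocal_rightOrthogonal_counit_app adj B
  have : (S.rightOrthogonal.ι ⋙ Functor.rightAdjoint S.leftOrthogonal.ι).Full :=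
    ⟨fun g => (hmap _ _).surjective g⟩
  have : (S.rightOrthogonal.ι ⋙ Functor.rightAdjoint S.leftOrthogonal.ι).Faithful :=
    ⟨fun h => (hmap _ _).injective h⟩
  refine ⟨_, adj, inferInstance, inferInstance,
    ⟨fun _ => ObjectProperty.isLeftAdjoint_ι_of_essSurj adj, fun _ => ?_⟩⟩
  have := ObjectProperty.essSurj_of_isLeftAdjoint adj
  exact { }
end

section
/- Let D₁' and D₂' be pretriangulated categories, let D₁ ⊆ D₁' and D₂ ⊆ D₂' be left-admissible full triangulated subcategories, and let F : D₁' → D₂' be a triangulated functor. Assume that: (i) F sends D₁ into D₂ and the left orthogonal ^⊥D₁ into ^⊥D₂, and the induced functors D₁ → D₂ and ^⊥D₁ → ^⊥D₂ are equivalences of categories; and (ii) D₁ is also right admissible in D₁', and F sends the right orthogonal D₁^⊥ into D₂^⊥. Then F is an equivalence of categories. -/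
/-!
STATEMENT 1: Let D₁' and D₂' be pretriangulated categories, let D₁ ⊆ D₁' and D₂ ⊆ D₂' be
left-admissible full triangulated subcategories, and let F : D₁' → D₂' be a triangulated
functor. Assume that: (i) F sends D₁ into D₂ and the left orthogonal ^⊥D₁ into ^⊥D₂, and the
induced functors D₁ → D₂ and ^⊥D₁ → ^⊥D₂ are equivalences of categories; and (ii) D₁ is also
right admissible in D₁', and F sends the right orthogonal D₁^⊥ into D₂^⊥. Then F is an
equivalence of categories.
-/

open CategoryTheory Limits CategoryTheory.Pretriangulated

namespace CategoryTheory.Triangulated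

/-- The (former Mathlib) structure of a full triangulated subcategory. -/
structure Subcategory (C : Type*) [Category C] [HasZeroObject C] [HasShift C ℤ]
    [Preadditive C] [∀ n : ℤ, (shiftFunctor C n).Additive] [Pretriangulated C] where
  P : C → Prop
  zero' : ∃ (Z : C) (_ : IsZero Z), P Z
  shift (X : C) (n : ℤ) : P X → P (X⟦n⟧)
  ext₂' (T : Triangle C) (_ : T ∈ distTriang C) : P T.obj₁ → P T.obj₃ →
    ObjectProperty.isoClosure P T.obj₂

end CategoryTheory.Triangulated

/-!
By the five lemma on the long exact `Hom` sequences of distinguished triangles, `F` is bijective on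
`Hom(M, N)` once it is bijective on `Hom(M, -)` at the two outer vertices of a triangle through `N`
and at their shifts, and likewise in `M`. Split objects along `^⊥D₁ → N → D₁` (left admissibility)
or `D₁ → N → D₁^⊥` (right admissibility). Then (i) gives bijectivity on `Hom(D₁, D₁)` and on
`Hom(^⊥D₁, ^⊥D₁)`, while `Hom(^⊥D₁, D₁)` and, by (ii), `Hom(D₁, D₁^⊥)` vanish on both sides; this
settles `Hom(^⊥D₁, -)` and `Hom(D₁, -)`, hence all of `Hom`. Finally, the essential image of a full
triangulated functor is closed under extensions and contains `D₂` and `^⊥D₂`, hence all of `D₂'`.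
-/

namespace CategoryTheory

section Shift

variable {C : Type*} [Category C] {A : Type*} [AddGroup A] [HasShift C A]
  {P : ObjectProperty C} [P.IsStableUnderShift A]

lemma ObjectProperty.isLocal_shift_s1 {X Y : C} {f : X ⟶ Y} (hf : P.isLocal f) (n : A) :
    P.isLocal (f⟦n⟧') := by
  intro Z hZ
  let e := (shiftEquiv C n).toAdjunction.homEquiv
  have : (fun g : Y⟦n⟧ ⟶ Z => f⟦n⟧' ≫ g) = (e X Z).symm ∘ (f ≫ ·) ∘ e Y Z := by
    funext g
    change _ = (e X Z).symm (f ≫ e Y Z g)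
    rw [Adjunction.homEquiv_naturality_left_symm]
    exact congrArg _ ((e Y Z).symm_apply_apply g).symm
  rw [this]
  exact (e X Z).symm.bijective.comp ((hf _ (P.le_shift (-n) _ hZ)).comp (e Y Z).bijective)

lemma ObjectProperty.isColocal_shift_s1 {X Y : C} {f : X ⟶ Y} (hf : P.isColocal f) (n : A) :
    P.isColocal (f⟦n⟧') := by
  intro Z hZ
  let e := (shiftEquiv C n).symm.toAdjunction.homEquiv
  have : (fun g : Z ⟶ X⟦n⟧ => g ≫ f⟦n⟧') = e Z Y ∘ (· ≫ f) ∘ (e Z X).symm := by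
    funext g
    change _ = e Z Y ((e Z X).symm g ≫ f)
    rw [Adjunction.homEquiv_naturality_right]
    exact congrArg (· ≫ _) ((e Z X).apply_symm_apply g).symm
  rw [this]
  exact (e Z Y).bijective.comp ((hf _ (P.le_shift (-n) _ hZ)).comp (e Z X).symm.bijective)

end Shift

section Orthogonal

variable {C : Type*} [Category C] [Preadditive C]

lemma leftOrthogonal_eq_objectPropertyLeftOrthogonal (P : ObjectProperty C) :
    leftOrthogonal P = P.leftOrthogonal := by
  ext M
  exact ⟨fun h N f hN => h N hN f, fun h N hN f => h f hN⟩

lemma rightOrthogonal_eq_objectPropertyRightOrthogonal (P : ObjectProperty C) :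
    rightOrthogonal P = P.rightOrthogonal := by
  ext M
  exact ⟨fun h N f hN => h N hN f, fun h N hN f => h f hN⟩

variable {A : Type*} [AddGroup A] [HasShift C A] (P : ObjectProperty C) [P.IsStableUnderShift A]

instance : ObjectProperty.IsStableUnderShift (leftOrthogonal P) A :=
  leftOrthogonal_eq_objectPropertyLeftOrthogonal P ▸ inferInstance

instance : ObjectProperty.IsStableUnderShift (rightOrthogonal P) A :=
  rightOrthogonal_eq_objectPropertyRightOrthogonal P ▸ inferInstance

end Orthogonal

section Pretriangulated

variable {C : Type*} [Category C] [HasZeroObject C] [HasShift C ℤ] [Preadditive C]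
  [∀ n : ℤ, (shiftFunctor C n).Additive] [Pretriangulated C]

instance (S : Triangulated.Subcategory C) : ObjectProperty.IsStableUnderShift S.P ℤ where
  isStableUnderShiftBy n := ⟨fun X hX => S.shift X n hX⟩

variable {P : ObjectProperty C} [P.IsStableUnderShift ℤ]

lemma leftOrthogonal_obj₃_of_isLocal {T : Triangle C} (hT : T ∈ distTriang C)
    (h : P.isLocal T.mor₁) : leftOrthogonal P T.obj₃ := by
  intro Z hZ u
  have hu : T.mor₂ ≫ u = 0 :=
    (h Z hZ).1 (by simp [reassoc_of% comp_distTriang_mor_zero₁₂ T hT])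
  obtain ⟨v, rfl⟩ := T.yoneda_exact₃ hT u hu
  obtain ⟨w, rfl⟩ := (ObjectProperty.isLocal_shift_s1 h (1 : ℤ) Z hZ).2 v
  simp [reassoc_of% comp_distTriang_mor_zero₃₁ T hT]

lemma rightOrthogonal_obj₃_of_isColocal {T : Triangle C} (hT : T ∈ distTriang C)
    (h : P.isColocal T.mor₁) : rightOrthogonal P T.obj₃ := by
  intro Z hZ u
  have hu : u ≫ T.mor₃ = 0 :=
    (ObjectProperty.isColocal_shift_s1 h (1 : ℤ) Z hZ).1
      (by simp [comp_distTriang_mor_zero₃₁ T hT])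
  obtain ⟨v, rfl⟩ := T.coyoneda_exact₃ hT u hu
  obtain ⟨w, rfl⟩ := (h Z hZ).2 v
  simp [comp_distTriang_mor_zero₁₂ T hT]

variable (P) in
lemma exists_distTriang_leftOrthogonal_of_isRightAdjoint [P.ι.IsRightAdjoint] (X : C) :
    ∃ (A B : C) (a : A ⟶ X) (b : X ⟶ B) (c : B ⟶ A⟦(1 : ℤ)⟧),
      leftOrthogonal P A ∧ P B ∧ Triangle.mk a b c ∈ distTriang C := by
  let adj := Adjunction.ofIsRightAdjoint P.ι
  obtain ⟨Z, g, h, hT⟩ := distinguished_cocone_triangle (adj.unit.app X)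
  have hZ : leftOrthogonal P Z := leftOrthogonal_obj₃_of_isLocal hT
    (fun N hN => ObjectProperty.isLocal_adj_unit_app adj X N ⟨⟨N, hN⟩, rfl⟩)
  exact ⟨_, _, _, _, _, ObjectProperty.le_shift _ (-1 : ℤ) _ hZ,
    (P.ι.leftAdjoint.obj X).property, inv_rot_of_distTriang _ hT⟩

variable (P) in
lemma exists_distTriang_rightOrthogonal_of_isLeftAdjoint [P.ι.IsLeftAdjoint] (X : C) :
    ∃ (A B : C) (a : A ⟶ X) (b : X ⟶ B) (c : B ⟶ A⟦(1 : ℤ)⟧),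
      P A ∧ rightOrthogonal P B ∧ Triangle.mk a b c ∈ distTriang C := by
  let adj := Adjunction.ofIsLeftAdjoint P.ι
  obtain ⟨Z, g, h, hT⟩ := distinguished_cocone_triangle (adj.counit.app X)
  exact ⟨_, _, _, _, _, (P.ι.rightAdjoint.obj X).property, rightOrthogonal_obj₃_of_isColocal hT
    (fun N hN => ObjectProperty.isColocal_adj_counit_app adj X N ⟨⟨N, hN⟩, rfl⟩), hT⟩

lemma exact_rightComp_of_mem_distTriang {T : Triangle C} (hT : T ∈ distTriang C) (X : C) :
    Function.Exact (Preadditive.rightComp X T.mor₁) (Preadditive.rightComp X T.mor₂) := by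
  intro g
  refine ⟨fun hg => ?_, ?_⟩
  · obtain ⟨f, rfl⟩ := T.coyoneda_exact₂ hT g hg
    exact ⟨f, rfl⟩
  · rintro ⟨f, rfl⟩
    simp [Preadditive.rightComp, comp_distTriang_mor_zero₁₂ T hT]

lemma exact_leftComp_of_mem_distTriang {T : Triangle C} (hT : T ∈ distTriang C) (Y : C) :
    Function.Exact (Preadditive.leftComp Y T.mor₂) (Preadditive.leftComp Y T.mor₁) := by
  intro g
  refine ⟨fun hg => ?_, ?_⟩
  · obtain ⟨f, rfl⟩ := T.yoneda_exact₂ hT g hg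
    exact ⟨f, rfl⟩
  · rintro ⟨f, rfl⟩
    simp [Preadditive.leftComp, reassoc_of% comp_distTriang_mor_zero₁₂ T hT]

end Pretriangulated

def Functor.MapBijective {C D : Type*} [Category C] [Category D] (F : C ⥤ D) (X Y : C) : Prop :=
  Function.Bijective (F.map : (X ⟶ Y) → (F.obj X ⟶ F.obj Y))

section MapBijective

variable {C D : Type*} [Category C] [Category D]

lemma Functor.mapBijective_of_lift (F : C ⥤ D) {P : ObjectProperty C} {Q : ObjectProperty D}
    (hF : ∀ X : P.FullSubcategory, Q (F.obj X.obj)) [(Q.lift (P.ι ⋙ F) hF).Full]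
    [(Q.lift (P.ι ⋙ F) hF).Faithful] {X : C} (hX : P X) ⦃Y : C⦄ (hY : P Y) :
    F.MapBijective X Y :=
  Q.fullyFaithfulι.map_bijective _ _ |>.comp
    ((Functor.FullyFaithful.ofFullyFaithful (Q.lift (P.ι ⋙ F) hF)).map_bijective
      (X := ⟨X, hX⟩) (Y := ⟨Y, hY⟩) |>.comp (P.fullyFaithfulι.homEquiv.symm.bijective))

lemma Functor.mem_essImage_of_lift (F : C ⥤ D) {P : ObjectProperty C} {Q : ObjectProperty D}
    (hF : ∀ X : P.FullSubcategory, Q (F.obj X.obj)) [(Q.lift (P.ι ⋙ F) hF).EssSurj]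
    {Y : D} (hY : Q Y) : F.essImage Y :=
  ⟨_, ⟨Q.ι.mapIso ((Q.lift (P.ι ⋙ F) hF).objObjPreimageIso ⟨Y, hY⟩)⟩⟩

lemma Functor.mapBijective_of_forall_eq_zero [Preadditive C] [Preadditive D] (F : C ⥤ D)
    [F.PreservesZeroMorphisms] {X Y : C} (h : ∀ f : X ⟶ Y, f = 0)
    (h' : ∀ g : F.obj X ⟶ F.obj Y, g = 0) : F.MapBijective X Y :=
  ⟨fun f₁ f₂ _ => (h f₁).trans (h f₂).symm, fun g => ⟨0, (F.map_zero X Y).trans (h' g).symm⟩⟩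

variable [HasZeroObject C] [HasShift C ℤ] [Preadditive C]
  [∀ n : ℤ, (shiftFunctor C n).Additive] [Pretriangulated C]
  [HasZeroObject D] [HasShift D ℤ] [Preadditive D]
  [∀ n : ℤ, (shiftFunctor D n).Additive] [Pretriangulated D]
  (F : C ⥤ D) [F.CommShift ℤ] [F.IsTriangulated]

lemma Functor.mapBijective_obj₂_right {T : Triangle C} (hT : T ∈ distTriang C) (X : C)
    (h₁ : F.MapBijective X T.obj₁) (h₃ : F.MapBijective X T.obj₃)
    (h₁' : F.MapBijective X (T.obj₁⟦(1 : ℤ)⟧)) (h₃' : F.MapBijective X (T.obj₃⟦(-1 : ℤ)⟧)) :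
    F.MapBijective X T.obj₂ :=
  have hT' := inv_rot_of_distTriang _ hT
  have hT'' := rot_of_distTriang _ hT
  AddMonoidHom.bijective_of_surjective_of_bijective_of_bijective_of_injective
    _ _ _ _ _ _ _ _ F.mapAddHom F.mapAddHom F.mapAddHom F.mapAddHom F.mapAddHom
    (AddMonoidHom.ext fun f => (F.map_comp f _).symm)
    (AddMonoidHom.ext fun f => (F.map_comp f _).symm)
    (AddMonoidHom.ext fun f => (F.map_comp f _).symm)
    (AddMonoidHom.ext fun f => (F.map_comp f _).symm)
    (exact_rightComp_of_mem_distTriang hT' X) (exact_rightComp_of_mem_distTriang hT X)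
    (exact_rightComp_of_mem_distTriang hT'' X)
    (exact_rightComp_of_mem_distTriang (F.map_distinguished _ hT') (F.obj X))
    (exact_rightComp_of_mem_distTriang (F.map_distinguished _ hT) (F.obj X))
    (exact_rightComp_of_mem_distTriang (F.map_distinguished _ hT'') (F.obj X))
    h₃'.2 h₁ h₃ h₁'.1

lemma Functor.mapBijective_obj₂_left {T : Triangle C} (hT : T ∈ distTriang C) (Y : C)
    (h₁ : F.MapBijective T.obj₁ Y) (h₃ : F.MapBijective T.obj₃ Y)
    (h₁' : F.MapBijective (T.obj₁⟦(1 : ℤ)⟧) Y) (h₃' : F.MapBijective (T.obj₃⟦(-1 : ℤ)⟧) Y) :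
    F.MapBijective T.obj₂ Y :=
  have hT' := inv_rot_of_distTriang _ hT
  have hT'' := rot_of_distTriang _ hT
  AddMonoidHom.bijective_of_surjective_of_bijective_of_bijective_of_injective
    _ _ _ _ _ _ _ _ F.mapAddHom F.mapAddHom F.mapAddHom F.mapAddHom F.mapAddHom
    (AddMonoidHom.ext fun f => (F.map_comp _ f).symm)
    (AddMonoidHom.ext fun f => (F.map_comp _ f).symm)
    (AddMonoidHom.ext fun f => (F.map_comp _ f).symm)
    (AddMonoidHom.ext fun f => (F.map_comp _ f).symm)
    (exact_leftComp_of_mem_distTriang hT'' Y) (exact_leftComp_of_mem_distTriang hT Y)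
    (exact_leftComp_of_mem_distTriang hT' Y)
    (exact_leftComp_of_mem_distTriang (F.map_distinguished _ hT'') (F.obj Y))
    (exact_leftComp_of_mem_distTriang (F.map_distinguished _ hT) (F.obj Y))
    (exact_leftComp_of_mem_distTriang (F.map_distinguished _ hT') (F.obj Y))
    h₁'.2 h₃ h₁ h₃'.1

variable {F} {Q₁ Q₃ : ObjectProperty C} [Q₁.IsStableUnderShift ℤ] [Q₃.IsStableUnderShift ℤ]

lemma Functor.mapBijective_obj₂_right_of_forall {X : C}
    (h₁ : ∀ ⦃Y⦄, Q₁ Y → F.MapBijective X Y) (h₃ : ∀ ⦃Y⦄, Q₃ Y → F.MapBijective X Y)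
    {T : Triangle C} (hT : T ∈ distTriang C) (hT₁ : Q₁ T.obj₁) (hT₃ : Q₃ T.obj₃) :
    F.MapBijective X T.obj₂ :=
  F.mapBijective_obj₂_right hT X (h₁ hT₁) (h₃ hT₃)
    (h₁ (Q₁.le_shift (1 : ℤ) _ hT₁)) (h₃ (Q₃.le_shift (-1 : ℤ) _ hT₃))

lemma Functor.mapBijective_obj₂_left_of_forall {Y : C}
    (h₁ : ∀ ⦃X⦄, Q₁ X → F.MapBijective X Y) (h₃ : ∀ ⦃X⦄, Q₃ X → F.MapBijective X Y)
    {T : Triangle C} (hT : T ∈ distTriang C) (hT₁ : Q₁ T.obj₁) (hT₃ : Q₃ T.obj₃) :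
    F.MapBijective T.obj₂ Y :=
  F.mapBijective_obj₂_left hT Y (h₁ hT₁) (h₃ hT₃)
    (h₁ (Q₁.le_shift (1 : ℤ) _ hT₁)) (h₃ (Q₃.le_shift (-1 : ℤ) _ hT₃))

end MapBijective

end CategoryTheory

theorem stmt1 {D₁' : Type u₁} {D₂' : Type u₂} [Category.{v₁} D₁'] [Category.{v₂} D₂']
    [HasZeroObject D₁'] [HasShift D₁' ℤ] [Preadditive D₁']
    [∀ n : ℤ, (shiftFunctor D₁' n).Additive] [Pretriangulated D₁']
    [HasZeroObject D₂'] [HasShift D₂' ℤ] [Preadditive D₂']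
    [∀ n : ℤ, (shiftFunctor D₂' n).Additive] [Pretriangulated D₂']
    (S₁ : Triangulated.Subcategory D₁') (S₂ : Triangulated.Subcategory D₂')
    -- both subcategories are left admissible (the inclusions admit left adjoints):
    (hadm₁ : (ObjectProperty.ι S₁.P).IsRightAdjoint)
    (hadm₂ : (ObjectProperty.ι S₂.P).IsRightAdjoint)
    -- `F` is a triangulated functor:
    (F : D₁' ⥤ D₂') [F.CommShift ℤ] [F.IsTriangulated]
    -- (i) `F` sends `D₁` into `D₂` and `^⊥D₁` into `^⊥D₂` ...
    (hD : ∀ X : ObjectProperty.FullSubcategory S₁.P, S₂.P (F.obj X.obj))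
    (hperp : ∀ X : ObjectProperty.FullSubcategory (leftOrthogonal S₁.P),
      leftOrthogonal S₂.P (F.obj X.obj))
    -- ... and the induced functors `D₁ → D₂` and `^⊥D₁ → ^⊥D₂` are equivalences:
    (heq : (ObjectProperty.lift S₂.P (ObjectProperty.ι S₁.P ⋙ F)
      hD).IsEquivalence)
    (heqperp : (ObjectProperty.lift (leftOrthogonal S₂.P)
      (ObjectProperty.ι (leftOrthogonal S₁.P) ⋙ F) hperp).IsEquivalence)
    -- (ii) `D₁` is also right admissible (the inclusion admits a right adjoint) ...
    (hradm₁ : (ObjectProperty.ι S₁.P).IsLeftAdjoint)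
    -- ... and `F` sends `D₁^⊥` into `D₂^⊥`:
    (hrperp : ∀ X : D₁', rightOrthogonal S₁.P X → rightOrthogonal S₂.P (F.obj X)) :
    F.IsEquivalence := by
  have hLD {X : D₁'} (hX : leftOrthogonal S₁.P X) ⦃Y : D₁'⦄ (hY : S₁.P Y) : F.MapBijective X Y :=
    F.mapBijective_of_forall_eq_zero (hX Y hY) (hperp ⟨X, hX⟩ _ (hD ⟨Y, hY⟩))
  have hDR {X : D₁'} (hX : S₁.P X) ⦃Y : D₁'⦄ (hY : rightOrthogonal S₁.P Y) : F.MapBijective X Y :=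
    F.mapBijective_of_forall_eq_zero (hY X hX) (hrperp Y hY _ (hD ⟨X, hX⟩))
  have hFromPerp {X : D₁'} (hX : leftOrthogonal S₁.P X) (Y : D₁') : F.MapBijective X Y := by
    obtain ⟨A, B, a, b, c, hA, hB, hT⟩ := exists_distTriang_leftOrthogonal_of_isRightAdjoint S₁.P Y
    exact F.mapBijective_obj₂_right_of_forall (F.mapBijective_of_lift hperp hX) (hLD hX) hT hA hB
  have hFromD {X : D₁'} (hX : S₁.P X) (Y : D₁') : F.MapBijective X Y := by
    obtain ⟨A, B, a, b, c, hA, hB, hT⟩ := exists_distTriang_rightOrthogonal_of_isLeftAdjoint S₁.P Y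
    exact F.mapBijective_obj₂_right_of_forall (F.mapBijective_of_lift hD hX) (hDR hX) hT hA hB
  have hAll (X Y : D₁') : F.MapBijective X Y := by
    obtain ⟨A, B, a, b, c, hA, hB, hT⟩ := exists_distTriang_leftOrthogonal_of_isRightAdjoint S₁.P X
    exact F.mapBijective_obj₂_left_of_forall (fun _ h => hFromPerp h Y) (fun _ h => hFromD h Y)
      hT hA hB
  have : F.Full := ⟨(hAll _ _).2⟩
  have : F.Faithful := ⟨fun h => (hAll _ _).1 h⟩
  have : F.EssSurj := ⟨fun Z => by
    obtain ⟨A, B, a, b, c, hA, hB, hT⟩ := exists_distTriang_leftOrthogonal_of_isRightAdjoint S₂.P Z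
    exact F.essImage.ext_of_isTriangulatedClosed₂ _ hT
      (F.mem_essImage_of_lift hperp hA) (F.mem_essImage_of_lift hD hB)⟩
  exact { }
end

section
/- Let C be a small category and let S = ⟨S₀, (c_s)_{s ∈ S₀}⟩ be an object of the wreath product C ≀ Γ. Then the slice category (C ≀ Γ)/S of objects of C ≀ Γ equipped with a morphism to S is equivalent to the wreath product (C/S) ≀ Γ, where C/S is the category whose objects are pairs (c, φ) of an object c of C and a morphism φ : j(c) → S in C ≀ Γ (equivalently, an element s ∈ S₀ together with a morphism c → c_s in C), and whose morphisms (c, φ) → (c', φ') are morphisms ψ : c → c' in C with φ' ∘ j(ψ) = φ. -/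
/-!
STATEMENT 5: Let C be a small category and let S = ⟨S₀, (c_s)_{s ∈ S₀}⟩ be an object of the
wreath product C ≀ Γ. Then the slice category (C ≀ Γ)/S is equivalent to the wreath product
(C/S) ≀ Γ, where C/S is the category of pairs (c, φ : j(c) → S) — i.e. the costructured
arrow category of the embedding j : C → C ≀ Γ over S.
-/

open CategoryTheory

universe v u

/-- The wreath product `C ≀ Γ`: objects are pairs of a finite set and a family of objects
of `C` indexed by it. -/
structure Wreath (C : Type u) [Category.{v} C] : Type (max u 1) where
  ι : Type
  [fin : Fintype ι]
  obj : ι → C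

attribute [instance] Wreath.fin

variable {C : Type u} [Category.{v} C]

/-- Morphisms in the wreath product: a map of index sets together with a family of
morphisms of `C`. -/
structure WreathHom (X Y : Wreath C) : Type (max 1 v) where
  map : X.ι → Y.ι
  hom : ∀ s, X.obj s ⟶ Y.obj (map s)

theorem WreathHom.ext' {X Y : Wreath C}
    {f g : WreathHom X Y} (h1 : f.map = g.map) (h2 : HEq f.hom g.hom) : f = g := by
  cases f; cases g
  cases h1; cases h2; rfl

instance : Quiver (Wreath C) := ⟨WreathHom⟩

instance : CategoryStruct (Wreath C) where
  id X := WreathHom.mk (fun s => s) (fun s => 𝟙 _)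
  comp f g := WreathHom.mk (fun s => g.map (f.map s)) (fun s => f.hom s ≫ g.hom (f.map s))

instance wreathCategory : Category (Wreath C) where
  id_comp f := WreathHom.ext' rfl (heq_of_eq (funext fun s => Category.id_comp _))
  comp_id f := WreathHom.ext' rfl (heq_of_eq (funext fun s => Category.comp_id _))
  assoc f g h := WreathHom.ext' rfl (heq_of_eq (funext fun s => Category.assoc _ _ _))

/-- The full embedding `j : C → C ≀ Γ` sending `c` to the one-element family `c`. -/
def wreathEmbedding (C : Type u) [Category.{v} C] : C ⥤ Wreath C where
  obj c := ⟨PUnit, fun _ => c⟩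
  map f := WreathHom.mk (fun s => s) (fun _ => f)
  map_id _ := rfl
  map_comp _ _ := rfl

/-- For `S : C ≀ Γ`, the category `C/S` of pairs `(c, φ : j(c) → S)` of an object of `C`
and a morphism `j(c) → S` in `C ≀ Γ`, with morphisms `ψ : c → c'` satisfying
`φ' ∘ j(ψ) = φ`: this is the costructured arrow category of `j` over `S`. -/
abbrev WreathSlice (S : Wreath C) :=
  CostructuredArrow (wreathEmbedding C) S

/-!
An object `X = ⟨ι, c⟩` of `C ≀ Γ` is the coproduct of the `j(c s)`, so a morphism `X ⟶ S` is
the same as a family of morphisms `j(c s) ⟶ S`, that is, an `ι`-indexed family of objects of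
`C/S`. Restriction to the summands (`Wreath.component`) and copairing (`Wreath.desc`) are
mutually inverse on the nose, so the comparison functors compose to the identities
definitionally, and the unit and counit are identity isomorphisms.
-/

namespace Wreath

variable {X Y Z S : Wreath C}

def component (f : X ⟶ Y) (s : X.ι) : (wreathEmbedding C).obj (X.obj s) ⟶ Y :=
  ⟨fun _ => f.map s, fun _ => f.hom s⟩

def desc {ι : Type} [Fintype ι] {c : ι → C} (φ : ∀ s, (wreathEmbedding C).obj (c s) ⟶ S) :
    (⟨ι, c⟩ : Wreath C) ⟶ S :=
  ⟨fun s => (φ s).map PUnit.unit, fun s => (φ s).hom PUnit.unit⟩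

theorem component_comp (f : X ⟶ Y) (g : Y ⟶ Z) (s : X.ι) :
    component (f ≫ g) s = (wreathEmbedding C).map (f.hom s) ≫ component g (f.map s) :=
  rfl

theorem comp_desc {ι ι' : Type} [Fintype ι] [Fintype ι'] {c : ι → C} {c' : ι' → C}
    (m : ι → ι') (h : ∀ s, c s ⟶ c' (m s)) (φ : ∀ s, (wreathEmbedding C).obj (c' s) ⟶ S) :
    (⟨m, h⟩ : (⟨ι, c⟩ : Wreath C) ⟶ ⟨ι', c'⟩) ≫ desc φ =
      desc (fun s => (wreathEmbedding C).map (h s) ≫ φ (m s)) :=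
  rfl

end Wreath

section

open Wreath

variable (S : Wreath C)

def sliceToWreath : Over S ⥤ Wreath (WreathSlice S) where
  obj X := ⟨X.left.ι, fun s => CostructuredArrow.mk (component X.hom s)⟩
  map {X Y} g := ⟨g.left.map, fun s => CostructuredArrow.homMk (g.left.hom s)
    ((component_comp g.left Y.hom s).symm.trans
      (congrArg (fun f : X.left ⟶ S => component f s) (Over.w g)))⟩

def wreathToSlice : Wreath (WreathSlice S) ⥤ Over S where
  obj W := Over.mk (desc fun s => (W.obj s).hom)
  map {W W'} g := Over.homMk ⟨g.map, fun s => (g.hom s).left⟩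
    ((comp_desc _ _ _).trans (congrArg desc (funext fun s => CostructuredArrow.w (g.hom s))))

end

theorem stmt5 (C : Type u) [Category.{v} C] (S : Wreath C) :
    Nonempty (Over S ≌ Wreath (WreathSlice S)) :=
  ⟨.mk (sliceToWreath S) (wreathToSlice S) (Iso.refl _)
    (Iso.refl (wreathToSlice S ⋙ sliceToWreath S))⟩
end

section
/- Let Φ be a category and let ⟨P, I⟩ be a complementary pair of classes of morphisms of Φ; for an object b let i_b : ι(b) → b denote the initial object of Φ^I_b. Let i : c' → c be a morphism lying in I, and let g : ι(c) → c' be the unique morphism with i ∘ g = i_c (which exists and is unique because (ι(c), i_c) is initial in Φ^I_c and (c', i) is an object of Φ^I_c). Then g lies in I, and (ι(c), g) is an initial object of Φ^I_{c'}; in particular ι(c') is canonically isomorphic to ι(c). -/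
/-!
Right cancellation in `I`: if `g ≫ i` and `i` lie in `I`, factor `g = p ≫ j` with `p ∈ P`, `j ∈ I`.
Then `𝟙 ≫ (g ≫ i)` and `p ≫ (j ≫ i)` are two `P`–`I` factorizations of the same morphism, so `p`
is an isomorphism and `g` lies in `I`. Initiality of `g` over `c'` follows because composing with
`i` embeds `Φ^I_{c'}` into `Φ^I_c`, and initial objects are unique up to unique isomorphism.
-/

open CategoryTheory

universe v u

/-- A *complementary pair* of classes of morphisms `⟨P, I⟩` in a category `Φ`, in the sense
of Kaledin: (i) `P` and `I` are closed under composition and contain all isomorphisms;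
(ii) for every object `b`, the category `Φ^I_b` of `I`-morphisms into `b` has an initial
object; (iii) every morphism factors, uniquely up to unique isomorphism, as a morphism of
`P` followed by a morphism of `I`; (iv) every pair `p ∈ P`, `i ∈ I` with common source fits
into a cocartesian square with `p' ∈ P`, `i' ∈ I`. -/
structure IsComplementaryPair {Φ : Type u} [Category.{v} Φ]
    (P I : MorphismProperty Φ) : Prop where
  p_of_isIso : ∀ {a b : Φ} (f : a ⟶ b), IsIso f → P f
  i_of_isIso : ∀ {a b : Φ} (f : a ⟶ b), IsIso f → I f
  p_comp : ∀ {a b c : Φ} (f : a ⟶ b) (g : b ⟶ c), P f → P g → P (f ≫ g)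
  i_comp : ∀ {a b c : Φ} (f : a ⟶ b) (g : b ⟶ c), I f → I g → I (f ≫ g)
  exists_initial : ∀ b : Φ, ∃ (ib : Φ) (i0 : ib ⟶ b), I i0 ∧
      ∀ (b' : Φ) (i : b' ⟶ b), I i → ∃! g : ib ⟶ b', g ≫ i = i0
  exists_fact : ∀ {a b : Φ} (f : a ⟶ b), ∃ (m : Φ) (p : a ⟶ m) (i : m ⟶ b),
      P p ∧ I i ∧ p ≫ i = f
  fact_unique : ∀ {a b m m' : Φ} (p : a ⟶ m) (i : m ⟶ b) (p' : a ⟶ m') (i' : m' ⟶ b),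
      P p → I i → P p' → I i' → p ≫ i = p' ≫ i' →
      ∃! φ : m ⟶ m', IsIso φ ∧ p ≫ φ = p' ∧ φ ≫ i' = i
  exists_pushout : ∀ {b b₁ b₂ : Φ} (p : b ⟶ b₁) (i : b ⟶ b₂), P p → I i →
      ∃ (b₁₂ : Φ) (i' : b₁ ⟶ b₁₂) (p' : b₂ ⟶ b₁₂),
        P p' ∧ I i' ∧ IsPushout p i i' p'

section

variable {Φ : Type u} [Category.{v} Φ]

/-- `(ic, i0)` is an initial object of the category `Φ^I_c` of `I`-morphisms into `c`. -/
def IsInitialOver (I : MorphismProperty Φ) {ic c : Φ} (i0 : ic ⟶ c) : Prop :=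
  ∀ (b : Φ) (j : b ⟶ c), I j → ∃! h : ic ⟶ b, h ≫ j = i0

namespace IsInitialOver

variable {I : MorphismProperty Φ} {ic c : Φ} {i0 : ic ⟶ c}

theorem hom_ext (hinit : IsInitialOver I i0) {b : Φ} {j : b ⟶ c} (hj : I j) {h h' : ic ⟶ b}
    (hh : h ≫ j = i0) (hh' : h' ≫ j = i0) : h = h' :=
  (hinit b j hj).unique hh hh'

theorem of_comp [I.IsStableUnderComposition] (hinit : IsInitialOver I i0) {c' : Φ}
    {i : c' ⟶ c} (hi : I i) {g : ic ⟶ c'} (hg : g ≫ i = i0) : IsInitialOver I g := by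
  intro b j hj
  obtain ⟨h, hh, huniq⟩ := hinit b (j ≫ i) (I.comp_mem j i hj hi)
  refine ⟨h, hinit.hom_ext hi (by rw [Category.assoc, hh]) hg, fun h' hh' => huniq h' ?_⟩
  show h' ≫ j ≫ i = i0
  rw [← Category.assoc, hh', hg]

theorem exists_iso (hinit : IsInitialOver I i0) (hi0 : I i0) {ic' : Φ} {i0' : ic' ⟶ c}
    (hinit' : IsInitialOver I i0') (hi0' : I i0') : ∃ e : ic ≅ ic', e.hom ≫ i0' = i0 := by
  obtain ⟨k, hk, -⟩ := hinit ic' i0' hi0'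
  obtain ⟨h, hh, -⟩ := hinit' ic i0 hi0
  refine ⟨⟨k, h, hinit.hom_ext hi0 ?_ (Category.id_comp _),
    hinit'.hom_ext hi0' ?_ (Category.id_comp _)⟩, hk⟩
  · rw [Category.assoc, hh, hk]
  · rw [Category.assoc, hk, hh]

end IsInitialOver

namespace IsComplementaryPair

variable {P I : MorphismProperty Φ}

theorem isStableUnderComposition_right (cp : IsComplementaryPair P I) :
    I.IsStableUnderComposition :=
  ⟨cp.i_comp⟩

theorem mem_of_comp_mem (cp : IsComplementaryPair P I) {a b c : Φ} {g : a ⟶ b} {i : b ⟶ c}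
    (hgi : I (g ≫ i)) (hi : I i) : I g := by
  obtain ⟨m, p, j, hp, hj, rfl⟩ := cp.exists_fact g
  obtain ⟨φ, ⟨hφ, rfl, -⟩, -⟩ :=
    cp.fact_unique (𝟙 a) ((p ≫ j) ≫ i) p (j ≫ i) (cp.p_of_isIso _ inferInstance) hgi hp
      (cp.i_comp j i hj hi) (by simp)
  rw [Category.id_comp]
  exact cp.i_comp φ j (cp.i_of_isIso φ hφ) hj

end IsComplementaryPair

end

theorem stmt8 {Φ : Type u} [Category.{v} Φ] {P I : MorphismProperty Φ}
    (cp : IsComplementaryPair P I)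
    {c c' : Φ} (i : c' ⟶ c) (hi : I i)
    -- `(ic, i0)` is the initial object `ι(c) → c` of `Φ^I_c`:
    (ic : Φ) (i0 : ic ⟶ c) (hI0 : I i0)
    (hinit : ∀ (b' : Φ) (j : b' ⟶ c), I j → ∃! g : ic ⟶ b', g ≫ j = i0)
    -- `g` is the unique morphism with `i ∘ g = i_c`:
    (g : ic ⟶ c') (hg : g ≫ i = i0) :
    -- `g` lies in `I` ...
    I g ∧
    -- ... `(ι(c), g)` is an initial object of `Φ^I_{c'}` ...
    (∀ (b' : Φ) (j : b' ⟶ c'), I j → ∃! h : ic ⟶ b', h ≫ j = g) ∧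
    -- ... and in particular, `ι(c')` (any initial object of `Φ^I_{c'}`) is canonically
    -- isomorphic to `ι(c)`:
    (∀ (ic' : Φ) (i0' : ic' ⟶ c'), I i0' →
      (∀ (b' : Φ) (j : b' ⟶ c'), I j → ∃! h : ic' ⟶ b', h ≫ j = i0') →
      ∃ e : ic' ≅ ic, e.hom ≫ g = i0') := by
  have := cp.isStableUnderComposition_right
  have hIg : I g := cp.mem_of_comp_mem (hg ▸ hI0) hi
  have hgInit : IsInitialOver I g := IsInitialOver.of_comp hinit hi hg
  exact ⟨hIg, hgInit, fun _ _ hI0' hinit' => IsInitialOver.exists_iso hinit' hI0' hgInit hIg⟩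
end

section
/- Let C be a small category with pullbacks. The functor φ : S(C) → Q(C) sends every special morphism of S(C) to an isomorphism of Q(C), and precomposition with φ, F ↦ F ∘ φ, defines an equivalence between the category Fun(Q(C), Ab) of functors from Q(C) to the category Ab of abelian groups and the full subcategory Fun_sp(S(C), Ab) ⊆ Fun(S(C), Ab) consisting of those functors which send every special morphism of S(C) to an isomorphism. -/
open CategoryTheory CategoryTheory.Limits

universe v u

/-- An object of the category `S(C)`: a positive number of objects of `C` (here `n + 1`
objects) together with a chain of composable morphisms between them. -/
structure SObj (C : Type u) [Category.{v} C] where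
  n : ℕ
  chain : ComposableArrows C n

variable {C : Type u} [Category.{v} C]

/-- A morphism of `S(C)`: an order-preserving map of index sets together with a family of
morphisms of `C` (going backwards) such that all the induced squares are Cartesian
(commutative pullback squares). -/
structure SHom (X Y : SObj C) where
  idx : Fin (X.n + 1) →o Fin (Y.n + 1)
  t : ∀ i : Fin (X.n + 1), Y.chain.obj (idx i) ⟶ X.chain.obj i
  pb : ∀ (i j : Fin (X.n + 1)) (h : i ≤ j),
    IsPullback (t i) (Y.chain.map (homOfLE (idx.monotone h)))
      (X.chain.map (homOfLE h)) (t j)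

theorem SHom.ext' {X Y : SObj C} {f g : SHom X Y} (h1 : f.idx = g.idx)
    (h2 : HEq f.t g.t) : f = g := by
  cases f; cases g
  cases h1; cases h2; rfl

instance : Quiver (SObj C) := ⟨SHom⟩

instance : CategoryStruct (SObj C) where
  id X := SHom.mk OrderHom.id (fun i => 𝟙 _)
    (fun i j h => IsPullback.id_horiz _)
  comp f g := SHom.mk (g.idx.comp f.idx) (fun i => g.t (f.idx i) ≫ f.t i)
    (fun i j h => (g.pb _ _ (f.idx.monotone h)).paste_horiz (f.pb i j h))

instance : Category (SObj C) where
  id_comp f := SHom.ext' rfl (heq_of_eq (funext fun i => Category.comp_id _))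
  comp_id f := SHom.ext' rfl (heq_of_eq (funext fun i => Category.id_comp _))
  assoc f g h := SHom.ext' rfl (heq_of_eq (funext fun i => (Category.assoc _ _ _).symm))

/-- A morphism of `S(C)` is *special* if the index map identifies the source index set with
a final segment of the target index set and all the component morphisms in `C` are
isomorphisms. -/
def special (C : Type u) [Category.{v} C] : MorphismProperty (SObj C) :=
  fun X Y f => X.n ≤ Y.n ∧ (∀ i : Fin (X.n + 1), (SHom.idx f i : ℕ) = Y.n - X.n + (i : ℕ))
    ∧ ∀ i, IsIso (SHom.t f i)

/-- A morphism of `S(C)` is *co-special* if its index map preserves the first elements. -/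
def cospecial (C : Type u) [Category.{v} C] : MorphismProperty (SObj C) :=
  fun _ _ f => SHom.idx f 0 = 0

/-- A span `c₁ ← m → c₂` in `C`. -/
structure SpanO (c₁ c₂ : C) : Type (max u v) where
  mid : C
  l : mid ⟶ c₁
  r : mid ⟶ c₂

/-- Two spans are isomorphic if there is an isomorphism of the middle objects commuting
with both legs. -/
def spanSetoid (c₁ c₂ : C) : Setoid (SpanO c₁ c₂) where
  r s s' := ∃ e : s.mid ≅ s'.mid, e.hom ≫ s'.l = s.l ∧ e.hom ≫ s'.r = s.r
  iseqv := by
    constructor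
    · exact fun s => ⟨Iso.refl _, by simp, by simp⟩
    · rintro s s' ⟨e, h1, h2⟩
      exact ⟨e.symm, by rw [← h1]; simp, by rw [← h2]; simp⟩
    · rintro s s' s'' ⟨e, h1, h2⟩ ⟨e', h1', h2'⟩
      exact ⟨e ≪≫ e', by simp [h1', h1], by simp [h2', h2]⟩

variable (C) in
/-- The objects of the category `Q(C)`: the same as the objects of `C`. -/
def QCat := C

/-- An object of `C` seen as an object of `Q(C)`. -/
def QCat.mk (c : C) : QCat C := c

/-- An object of `Q(C)` seen as an object of `C`. -/
def QCat.obj (c : QCat C) : C := c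

variable [HasPullbacks C]

/-- Morphisms in `Q(C)` are isomorphism classes of spans. -/
instance : Quiver (QCat C) :=
  ⟨fun c₁ c₂ => Quotient (spanSetoid c₁.obj c₂.obj)⟩

/-- Identities are classes of identity spans; composition is defined via pullback. -/
noncomputable instance : CategoryStruct (QCat C) where
  id c := Quotient.mk _ (SpanO.mk c.obj (𝟙 c.obj) (𝟙 c.obj))
  comp {c₁ c₂ c₃} f g := Quotient.lift₂
    (fun (s : SpanO c₁.obj c₂.obj) (t : SpanO c₂.obj c₃.obj) =>
      Quotient.mk _ (SpanO.mk (pullback s.r t.l)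
        (pullback.fst s.r t.l ≫ s.l) (pullback.snd s.r t.l ≫ t.r)))
    (by
      rintro s t s' t' ⟨e, he1, he2⟩ ⟨e', hf1, hf2⟩
      apply Quotient.sound
      refine ⟨asIso (pullback.map s.r t.l s'.r t'.l e.hom e'.hom (𝟙 _)
        (by simp [he2]) (by simp [hf1])), ?_, ?_⟩
      · rw [asIso_hom, ← Category.assoc, pullback.lift_fst, Category.assoc, he1]
      · rw [asIso_hom, ← Category.assoc, pullback.lift_snd, Category.assoc, hf2]) f g

noncomputable instance : Category (QCat C) where
  id_comp {c₁ c₂} f := by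
    obtain ⟨s, rfl⟩ := Quotient.exists_rep f
    exact Quotient.sound ⟨asIso (pullback.snd (𝟙 c₁.obj) s.l),
      pullback.condition.symm, rfl⟩
  comp_id {c₁ c₂} f := by
    obtain ⟨s, rfl⟩ := Quotient.exists_rep f
    exact Quotient.sound ⟨asIso (pullback.fst s.r (𝟙 c₂.obj)), rfl,
      pullback.condition⟩
  assoc {c₁ c₂ c₃ c₄} f g h := by
    obtain ⟨s, rfl⟩ := Quotient.exists_rep f
    obtain ⟨t, rfl⟩ := Quotient.exists_rep g
    obtain ⟨u, rfl⟩ := Quotient.exists_rep h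
    refine Quotient.sound ⟨pullbackAssoc s.r t.l t.r u.l, ?_, ?_⟩
    · dsimp only
      rw [pullbackAssoc_hom_fst_assoc]
    · dsimp only
      rw [pullbackAssoc_hom_snd_snd_assoc]

/-- The functor `φ : S(C) → Q(C)`: it sends a chain `c₁ → ⋯ → c_n` to `c_n`, and a morphism
`⟨f, {f_i}⟩ : ⟨[n], c_•⟩ → ⟨[n'], c'_•⟩` to the class of the span
`c_n ← c'_{f(n)} → c'_{n'}` whose left leg is `f_n` and whose right leg is the composite of
the chain `c'_•`. -/
noncomputable def qfunctor (C : Type u) [Category.{v} C] [HasPullbacks C] :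
    SObj C ⥤ QCat C where
  obj X := QCat.mk (X.chain.obj (Fin.last X.n))
  map {X Y} f := Quotient.mk _ (SpanO.mk (Y.chain.obj (SHom.idx f (Fin.last X.n)))
    (SHom.t f (Fin.last X.n))
    (Y.chain.map (homOfLE (Fin.le_last _))))
  map_id X := by
    refine Quotient.sound ⟨Iso.refl _, Category.id_comp _, ?_⟩
    exact (Category.id_comp _).trans (X.chain.map_id _).symm
  map_comp {X Y Z} f g := by
    refine Quotient.sound
      ⟨(SHom.pb g (SHom.idx f (Fin.last X.n)) (Fin.last Y.n) (Fin.le_last _)).isoPullback,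
        ?_, ?_⟩
    · dsimp only
      exact (Category.assoc _ _ _).symm.trans
        (congrArg (· ≫ _) (IsPullback.isoPullback_hom_fst _))
    · dsimp only
      exact (Category.assoc _ _ _).symm.trans
        ((congrArg (· ≫ _) (IsPullback.isoPullback_hom_snd _)).trans
          ((Functor.map_comp _ _ _).symm.trans (congrArg _ (homOfLE_comp _ _))))

/-!
STATEMENT 9: Let C be a small category with pullbacks. The functor φ : S(C) → Q(C) sends
every special morphism of S(C) to an isomorphism of Q(C), and precomposition with φ,
F ↦ F ∘ φ, defines an equivalence between the category Fun(Q(C), Ab) of functors from Q(C)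
to the category Ab of abelian groups and the full subcategory Fun_sp(S(C), Ab) of functors
sending every special morphism of S(C) to an isomorphism.
-/

/-!
A span `s = (c₁ ← m → c₂)` is encoded in `S(C)` as the cospan `⟨c₁⟩ ⟶ ⟨m → c₂⟩ ⟵ ⟨c₂⟩` of
`s.inl` and `s.inr`; here `s.inr` is special, `φ s.inl = [s]` and `φ s.inr = 𝟙`. So a functor `F`
inverting the special morphisms induces `[s] ↦ F s.inl ≫ (F s.inr)⁻¹` on `Q(C)`. This is well
defined and functorial because isomorphic spans, identity spans, and a composite of spans are
related to each other by maps into short chains: for the composite of `c₁ ← m → c₂` and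
`c₂ ← m' → c₃` the chain is `m ×_{c₂} m' → m' → c₃`, whose first square is the pullback square.
Every chain `X` receives the special morphism `X.ofLast` from `⟨X_last⟩`, which gives
`φ ⋙ (induced functor) ≅ F`. For the localization functor of `S(C)` at the special morphisms, the
induced functor is inverse to the functor that `φ` induces on the localization. Hence `φ` is a
localization, and the theorem is the universal property of localizations.
-/

universe w

section

variable {C : Type u} [Category.{v} C]

namespace SObj

def mk₀ (c : C) : SObj C := ⟨0, ComposableArrows.mk₀ c⟩

def mk₁ {c d : C} (f : c ⟶ d) : SObj C := ⟨1, ComposableArrows.mk₁ f⟩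

def mk₂ {c d e : C} (f : c ⟶ d) (g : d ⟶ e) : SObj C := ⟨2, ComposableArrows.mk₂ f g⟩

abbrev last (X : SObj C) : C := X.chain.obj (Fin.last X.n)

end SObj

namespace SHom

lemma isPullback_self {X Y : SObj C} {i : Fin (X.n + 1)} {k : Fin (Y.n + 1)}
    (t : Y.chain.obj k ⟶ X.chain.obj i) (hk : k ≤ k) (hi : i ≤ i) :
    IsPullback t (Y.chain.map (homOfLE hk)) (X.chain.map (homOfLE hi)) t := by
  simp only [homOfLE_refl]
  rw [CategoryTheory.Functor.map_id, CategoryTheory.Functor.map_id]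
  exact IsPullback.id_vert t

def fromMk₀ {c : C} {Y : SObj C} (k : Fin (Y.n + 1)) (t : Y.chain.obj k ⟶ c) :
    SObj.mk₀ c ⟶ Y where
  idx := OrderHom.const _ k
  t _ := t
  pb i j h := by
    obtain rfl : i = j := Subsingleton.elim (α := Fin 1) i j
    exact isPullback_self t _ h

lemma fromMk₀_comp {c : C} {Y Z : SObj C} (k : Fin (Y.n + 1)) (t : Y.chain.obj k ⟶ c)
    (g : Y ⟶ Z) : fromMk₀ k t ≫ g = fromMk₀ (g.idx k) (g.t k ≫ t) :=
  rfl

lemma fromMk₀_zero_id (c : C) : fromMk₀ 0 (𝟙 c) = 𝟙 (SObj.mk₀ c) :=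
  SHom.ext' (OrderHom.ext _ _ (funext fun _ => Subsingleton.elim (α := Fin 1) _ _)) HEq.rfl

lemma special_fromMk₀_last {c : C} {Y : SObj C} (t : Y.last ⟶ c) [ht : IsIso t] :
    special C (fromMk₀ (Fin.last Y.n) t) :=
  ⟨Nat.zero_le _, fun i => by
    obtain rfl := Subsingleton.elim (α := Fin 1) i 0
    rfl, fun _ => ht⟩

def fromMk₁ {m d : C} (r : m ⟶ d) {Y : SObj C} (k₀ k₁ : Fin (Y.n + 1)) (hk : k₀ ≤ k₁)
    (t₀ : Y.chain.obj k₀ ⟶ m) (t₁ : Y.chain.obj k₁ ⟶ d)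
    (hpb : IsPullback t₀ (Y.chain.map (homOfLE hk)) r t₁) : SObj.mk₁ r ⟶ Y where
  idx := ⟨fun | ⟨0, _⟩ => k₀ | ⟨1, _⟩ => k₁, by
    rintro ⟨_ | _ | _, (hi : _ < 2)⟩ ⟨_ | _ | _, (hj : _ < 2)⟩ hij <;>
      first | exact le_rfl | exact hk | omega | exact absurd hij (Nat.not_succ_le_zero 0)⟩
  t
    | ⟨0, _⟩ => t₀
    | ⟨1, _⟩ => t₁
  pb := by
    rintro ⟨_ | _ | _, (hi : _ < 2)⟩ ⟨_ | _ | _, (hj : _ < 2)⟩ hij <;>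
      first | exact isPullback_self _ _ _ | exact hpb | omega |
        exact absurd hij (Nat.not_succ_le_zero 0)

lemma special_fromMk₁ {m d : C} (r : m ⟶ d) {Y : SObj C} (k₀ k₁ : Fin (Y.n + 1))
    (hk : k₀ ≤ k₁) (t₀ : Y.chain.obj k₀ ⟶ m) (t₁ : Y.chain.obj k₁ ⟶ d)
    (hpb : IsPullback t₀ (Y.chain.map (homOfLE hk)) r t₁) [ht₀ : IsIso t₀] [ht₁ : IsIso t₁]
    (h₀ : (k₀ : ℕ) + 1 = Y.n) (h₁ : k₁ = Fin.last Y.n) :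
    special C (fromMk₁ r k₀ k₁ hk t₀ t₁ hpb) := by
  have hn : (SObj.mk₁ r).n = 1 := rfl
  refine ⟨by omega, ?_, ?_⟩
  · rintro ⟨_ | _ | _, (hi : _ < 2)⟩
    · change (k₀ : ℕ) = Y.n - _ + 0
      omega
    · change (k₁ : ℕ) = Y.n - _ + 1
      rw [h₁, Fin.val_last]
      omega
    · omega
  · rintro ⟨_ | _ | _, (hi : _ < 2)⟩
    · exact ht₀
    · exact ht₁
    · omega

def mk₁OfIso {m m' d : C} {r : m ⟶ d} {r' : m' ⟶ d} (e : m ≅ m') (hr : e.hom ≫ r' = r) :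
    SObj.mk₁ r ⟶ SObj.mk₁ r' :=
  fromMk₁ r 0 1 zero_le_one e.inv (𝟙 d)
    (show IsPullback e.inv r' r (𝟙 d) from IsPullback.of_horiz_isIso ⟨by simp [← hr]⟩)

lemma special_mk₁OfIso {m m' d : C} {r : m ⟶ d} {r' : m' ⟶ d} (e : m ≅ m')
    (hr : e.hom ≫ r' = r) : special C (mk₁OfIso e hr) :=
  special_fromMk₁ (ht₀ := e.isIso_inv) (ht₁ := IsIso.id d) _ _ _ _ _ _ _ rfl rfl

end SHom

def SObj.ofLast (X : SObj C) : SObj.mk₀ X.last ⟶ X :=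
  SHom.fromMk₀ (Fin.last X.n) (𝟙 _)

lemma SObj.special_ofLast (X : SObj C) : special C X.ofLast :=
  SHom.special_fromMk₀_last _

end

section

variable {C : Type u} [Category.{v} C] {c₁ c₂ c₃ : C}

namespace SpanO

open SHom

def inl (s : SpanO c₁ c₂) : SObj.mk₀ c₁ ⟶ SObj.mk₁ s.r := fromMk₀ 0 s.l

def inr (s : SpanO c₁ c₂) : SObj.mk₀ c₂ ⟶ SObj.mk₁ s.r := fromMk₀ (Fin.last 1) (𝟙 c₂)

lemma special_inr (s : SpanO c₁ c₂) : special C s.inr :=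
  special_fromMk₀_last (ht := IsIso.id c₂) _

lemma inl_comp_mk₁OfIso {s s' : SpanO c₁ c₂} (e : s.mid ≅ s'.mid) (hl : e.hom ≫ s'.l = s.l)
    (hr : e.hom ≫ s'.r = s.r) : s.inl ≫ mk₁OfIso e hr = s'.inl :=
  (fromMk₀_comp _ _ _).trans (congrArg (fromMk₀ _) (e.inv_comp_eq.2 hl.symm))

lemma inr_comp_mk₁OfIso {s s' : SpanO c₁ c₂} (e : s.mid ≅ s'.mid) (hr : e.hom ≫ s'.r = s.r) :
    s.inr ≫ mk₁OfIso e hr = s'.inr :=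
  (fromMk₀_comp _ _ _).trans (congrArg (fromMk₀ _) (Category.comp_id (𝟙 c₂)))

protected def id (c : C) : SpanO c c := ⟨c, 𝟙 c, 𝟙 c⟩

def idToMk₀ (c : C) : SObj.mk₁ (SpanO.id c).r ⟶ SObj.mk₀ c :=
  fromMk₁ _ 0 0 le_rfl (𝟙 c) (𝟙 c)
    (show IsPullback (𝟙 c) (𝟙 c) (𝟙 c) (𝟙 c) from IsPullback.id_vert _)

lemma inl_comp_idToMk₀ (c : C) : (SpanO.id c).inl ≫ idToMk₀ c = 𝟙 _ :=
  ((fromMk₀_comp _ _ _).trans (congrArg (fromMk₀ _) (Category.comp_id _))).trans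
    (fromMk₀_zero_id c)

lemma inr_comp_idToMk₀ (c : C) : (SpanO.id c).inr ≫ idToMk₀ c = 𝟙 _ :=
  ((fromMk₀_comp _ _ _).trans (congrArg (fromMk₀ _) (Category.comp_id _))).trans
    (fromMk₀_zero_id c)

noncomputable section

variable [HasPullbacks C] (s : SpanO c₁ c₂) (t : SpanO c₂ c₃)

def comp : SpanO c₁ c₃ :=
  ⟨pullback s.r t.l, pullback.fst s.r t.l ≫ s.l, pullback.snd s.r t.l ≫ t.r⟩

def compChain : SObj C := SObj.mk₂ (pullback.snd s.r t.l) t.r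

def leftToCompChain : SObj.mk₁ s.r ⟶ compChain s t :=
  fromMk₁ s.r 0 1 (show (0 : Fin 3) ≤ 1 by decide) (pullback.fst s.r t.l) t.l
    (IsPullback.of_hasPullback s.r t.l)

def rightToCompChain : SObj.mk₁ t.r ⟶ compChain s t :=
  fromMk₁ t.r 1 2 (show (1 : Fin 3) ≤ 2 by decide) (𝟙 t.mid) (𝟙 c₃)
    (show IsPullback (𝟙 t.mid) t.r t.r (𝟙 c₃) from IsPullback.id_horiz t.r)

def compToCompChain : SObj.mk₁ (s.comp t).r ⟶ compChain s t :=
  fromMk₁ _ 0 2 (show (0 : Fin 3) ≤ 2 by decide) (𝟙 _) (𝟙 c₃)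
    (show IsPullback (𝟙 _) (s.comp t).r (s.comp t).r (𝟙 c₃) from IsPullback.id_horiz _)

lemma special_rightToCompChain : special C (rightToCompChain s t) :=
  special_fromMk₁ (ht₀ := IsIso.id t.mid) (ht₁ := IsIso.id c₃) _ _ _ _ _ _ _ rfl rfl

lemma inl_comp_compToCompChain :
    (s.comp t).inl ≫ compToCompChain s t = s.inl ≫ leftToCompChain s t :=
  congrArg (fromMk₀ 0) (Category.id_comp _)

lemma inr_comp_compToCompChain :
    (s.comp t).inr ≫ compToCompChain s t = t.inr ≫ rightToCompChain s t :=
  rfl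

lemma inr_comp_leftToCompChain :
    s.inr ≫ leftToCompChain s t = t.inl ≫ rightToCompChain s t :=
  congrArg (fromMk₀ 1) ((Category.comp_id _).trans (Category.id_comp _).symm)

end

end SpanO

variable {X Y : SObj C}

def qSpan (f : X ⟶ Y) : SpanO X.last Y.last :=
  ⟨Y.chain.obj (f.idx (Fin.last X.n)), f.t _, Y.chain.map (homOfLE (Fin.le_last _))⟩

def qSpanToTarget (f : X ⟶ Y) : SObj.mk₁ (qSpan f).r ⟶ Y :=
  SHom.fromMk₁ _ (f.idx (Fin.last X.n)) (Fin.last Y.n) (Fin.le_last _) (𝟙 _) (𝟙 _)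
    (show IsPullback (𝟙 _) (qSpan f).r (qSpan f).r (𝟙 _) from IsPullback.id_horiz _)

lemma inl_comp_qSpanToTarget (f : X ⟶ Y) : (qSpan f).inl ≫ qSpanToTarget f = X.ofLast ≫ f :=
  congrArg (SHom.fromMk₀ _) ((Category.id_comp _).trans (Category.comp_id _).symm)

lemma inr_comp_qSpanToTarget (f : X ⟶ Y) : (qSpan f).inr ≫ qSpanToTarget f = Y.ofLast :=
  congrArg (SHom.fromMk₀ _) (Category.comp_id _)

end

section

variable {C : Type u} [Category.{v} C] [HasPullbacks C] {c₁ c₂ : C}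

def QCat.homMk (s : SpanO c₁ c₂) : QCat.mk c₁ ⟶ QCat.mk c₂ := Quotient.mk _ s

lemma QCat.homMk_comp_homMk_swap (s : SpanO c₁ c₂) [IsIso s.l] [Mono s.r] :
    homMk s ≫ homMk ⟨s.mid, s.r, s.l⟩ = 𝟙 _ :=
  Quotient.sound ⟨(asIso (pullback.fst s.r s.r ≫ s.l) : pullback s.r s.r ≅ c₁),
    Category.comp_id _, (Category.comp_id _).trans
      (congrArg (· ≫ s.l) (fst_eq_snd_of_mono_eq s.r))⟩

lemma QCat.isIso_homMk (s : SpanO c₁ c₂) [IsIso s.l] [IsIso s.r] : IsIso (homMk s) :=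
  ⟨homMk ⟨s.mid, s.r, s.l⟩, homMk_comp_homMk_swap s, homMk_comp_homMk_swap ⟨s.mid, s.r, s.l⟩⟩

lemma isInvertedBy_qfunctor : (special C).IsInvertedBy (qfunctor C) := by
  rintro X Y f ⟨hn, hidx, hiso⟩
  have hlast : f.idx (Fin.last X.n) = Fin.last Y.n :=
    Fin.ext (by rw [hidx, Fin.val_last, Fin.val_last]; omega)
  have : IsIso (qSpan f).l := hiso _
  have : IsIso (homOfLE (Fin.le_last (f.idx (Fin.last X.n)))) := homOfLE_isIso_of_eq _ hlast
  have : IsIso (qSpan f).r := Functor.map_isIso _ _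
  exact QCat.isIso_homMk (qSpan f)

end

noncomputable section

variable {C : Type u} [Category.{v} C] {c₁ c₂ c₃ : C}
  {E : Type*} [Category E] (F : SObj C ⥤ E) (hF : (special C).IsInvertedBy F)

namespace SpanO

def lift (s : SpanO c₁ c₂) : F.obj (SObj.mk₀ c₁) ⟶ F.obj (SObj.mk₀ c₂) :=
  haveI := hF _ s.special_inr
  F.map s.inl ≫ inv (F.map s.inr)

lemma lift_eq_of_comp {s s' : SpanO c₁ c₂} (w : SObj.mk₁ s.r ⟶ SObj.mk₁ s'.r)
    (hw : special C w) (hl : s.inl ≫ w = s'.inl) (hr : s.inr ≫ w = s'.inr) :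
    lift F hF s = lift F hF s' := by
  have := hF _ s.special_inr
  have := hF _ hw
  simp [lift, ← hl, ← hr]

lemma lift_id (c : C) : lift F hF (SpanO.id c) = 𝟙 _ := by
  have := hF _ (SpanO.id c).special_inr
  have hinv : inv (F.map (SpanO.id c).inr) = F.map (idToMk₀ c) :=
    IsIso.inv_eq_of_hom_inv_id (by rw [← F.map_comp, inr_comp_idToMk₀, F.map_id])
  rw [lift, hinv, ← F.map_comp, inl_comp_idToMk₀, F.map_id]

end SpanO

variable [HasPullbacks C]

lemma SpanO.lift_comp (s : SpanO c₁ c₂) (t : SpanO c₂ c₃) :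
    lift F hF (s.comp t) = lift F hF s ≫ lift F hF t := by
  have := hF _ s.special_inr
  have := hF _ t.special_inr
  have := hF _ (s.comp t).special_inr
  have := hF _ (special_rightToCompChain s t)
  have hinv : inv (F.map (s.comp t).inr) =
      F.map (s.compToCompChain t) ≫ inv (F.map (s.rightToCompChain t)) ≫ inv (F.map t.inr) :=
    IsIso.inv_eq_of_hom_inv_id (by
      rw [← Category.assoc, ← F.map_comp, inr_comp_compToCompChain, F.map_comp]
      simp)
  have hmid : F.map (s.leftToCompChain t) ≫ inv (F.map (s.rightToCompChain t)) =
      inv (F.map s.inr) ≫ F.map t.inl := by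
    rw [IsIso.comp_inv_eq, Category.assoc, IsIso.eq_inv_comp, ← F.map_comp, ← F.map_comp,
      inr_comp_leftToCompChain]
  calc lift F hF (s.comp t)
      = F.map ((s.comp t).inl ≫ s.compToCompChain t) ≫
          inv (F.map (s.rightToCompChain t)) ≫ inv (F.map t.inr) := by
        rw [lift, hinv, F.map_comp, Category.assoc]
    _ = F.map s.inl ≫ (F.map (s.leftToCompChain t) ≫ inv (F.map (s.rightToCompChain t))) ≫
          inv (F.map t.inr) := by
        rw [inl_comp_compToCompChain, F.map_comp]
        simp only [Category.assoc]
    _ = lift F hF s ≫ lift F hF t := by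
        rw [hmid]
        simp only [lift, Category.assoc]

namespace QCat

def lift : QCat C ⥤ E where
  obj c := F.obj (SObj.mk₀ c.obj)
  map := Quotient.lift (SpanO.lift F hF) fun _ _ ⟨e, hl, hr⟩ =>
    SpanO.lift_eq_of_comp F hF _ (SHom.special_mk₁OfIso e hr)
      (SpanO.inl_comp_mk₁OfIso e hl hr) (SpanO.inr_comp_mk₁OfIso e hr)
  map_id c := SpanO.lift_id F hF c.obj
  map_comp := by
    rintro _ _ _ ⟨s⟩ ⟨t⟩
    exact SpanO.lift_comp F hF s t

def fac : qfunctor C ⋙ lift F hF ≅ F :=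
  NatIso.ofComponents (fun X : SObj C => have := hF _ X.special_ofLast
      (asIso (F.map X.ofLast) : F.obj (SObj.mk₀ X.last) ≅ F.obj X))
    fun {X Y} f => by
      have := hF _ (qSpan f).special_inr
      have hinv : inv (F.map (qSpan f).inr) ≫ F.map Y.ofLast = F.map (qSpanToTarget f) := by
        rw [IsIso.inv_comp_eq, ← F.map_comp, inr_comp_qSpanToTarget]
      change SpanO.lift F hF (qSpan f) ≫ F.map Y.ofLast = F.map X.ofLast ≫ F.map f
      rw [SpanO.lift, Category.assoc, hinv, ← F.map_comp, inl_comp_qSpanToTarget, F.map_comp]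

end QCat

end

noncomputable section

variable (C : Type u) [Category.{v} C] [HasPullbacks C]

def localizationEquivQCat : (special C).Localization ≌ QCat C := by
  let Φ := Localization.Construction.lift (qfunctor C) isInvertedBy_qfunctor
  let Ψ := QCat.lift (special C).Q (special C).Q_inverts
  have hΦ : (special C).Q ⋙ Φ = qfunctor C := Localization.Construction.fac _ _
  refine CategoryTheory.Equivalence.mk Φ Ψ ?_ (NatIso.ofComponents (fun _ => Iso.refl _) ?_)
  · refine (Localization.fullyFaithfulWhiskeringLeft (special C).Q (special C) _).preimageIso ?_
    exact (special C).Q.rightUnitor ≪≫ (QCat.fac _ _).symm ≪≫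
      Functor.isoWhiskerRight (eqToIso hΦ.symm) Ψ
  · rintro _ _ ⟨s⟩
    have := (special C).Q_inverts _ s.special_inr
    -- `Construction.fac` holds on objects by `rfl`, so the `eqToHom`s of `congr_hom` are `𝟙`.
    have hl : Φ.map ((special C).Q.map s.inl) = (qfunctor C).map s.inl :=
      (Functor.congr_hom hΦ s.inl).trans ((Category.id_comp _).trans (Category.comp_id _))
    have hr : inv (Φ.map ((special C).Q.map s.inr)) = 𝟙 _ :=
      IsIso.inv_eq_of_hom_inv_id ((Category.comp_id _).trans
        ((Functor.congr_hom hΦ s.inr).trans ((Category.id_comp _).trans (Category.comp_id _))))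
    change Φ.map ((special C).Q.map s.inl ≫ inv ((special C).Q.map s.inr)) ≫ 𝟙 _ =
      𝟙 _ ≫ (qfunctor C).map s.inl
    rw [Functor.map_comp, Functor.map_inv, hr, hl, Category.comp_id, Category.id_comp]
    exact Category.comp_id _

instance qfunctor_isLocalization : (qfunctor C).IsLocalization (special C) :=
  ⟨isInvertedBy_qfunctor, (localizationEquivQCat C).isEquivalence_functor⟩

end

theorem stmt9 (C : Type u) [Category.{v} C] [HasPullbacks C] :
    -- `φ` sends special morphisms to isomorphisms ...
    (∀ {X Y : SObj C} (f : X ⟶ Y), special C f → IsIso ((qfunctor C).map f)) ∧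
    -- ... and precomposition with `φ` is an equivalence of `Fun(Q(C), Ab)` with the full
    -- subcategory `Fun_sp(S(C), Ab) ⊆ Fun(S(C), Ab)`: it is fully faithful, takes values
    -- in `Fun_sp(S(C), Ab)`, and every special functor is isomorphic to a functor in its
    -- image.
    (((Functor.whiskeringLeft (SObj C) (QCat C) AddCommGrpCat.{w}).obj (qfunctor C)).Full ∧
     ((Functor.whiskeringLeft (SObj C) (QCat C) AddCommGrpCat.{w}).obj (qfunctor C)).Faithful ∧
     (∀ (G : QCat C ⥤ AddCommGrpCat.{w}) {X Y : SObj C} (f : X ⟶ Y), special C f →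
        IsIso ((((Functor.whiskeringLeft (SObj C) (QCat C) AddCommGrpCat.{w}).obj
          (qfunctor C)).obj G).map f)) ∧
     (∀ F : SObj C ⥤ AddCommGrpCat.{w},
        (∀ {X Y : SObj C} (f : X ⟶ Y), special C f → IsIso (F.map f)) →
        ∃ G : QCat C ⥤ AddCommGrpCat.{w},
          Nonempty ((((Functor.whiskeringLeft (SObj C) (QCat C) AddCommGrpCat.{w}).obj
            (qfunctor C)).obj G) ≅ F))) := by
  refine ⟨fun f hf => isInvertedBy_qfunctor f hf,
    Localization.full_whiskeringLeft _ (special C) _,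
    Localization.faithful_whiskeringLeft _ (special C) _, fun G _ _ f hf => ?_,
    fun F hF => ⟨QCat.lift F (fun _ _ f hf => hF f hf), ⟨QCat.fac _ _⟩⟩⟩
  have := isInvertedBy_qfunctor f hf
  exact G.map_isIso ((qfunctor C).map f)
end

section
/- Let Γ₊ be the category of finite pointed sets and basepoint-preserving maps, and let T : Γ₊ → Ab be the functor assigning to a pointed set (S, *) the free abelian group ℤ[S ∖ {*}], with a pointed map f acting by [s] ↦ [f(s)] if f(s) ≠ * and [s] ↦ 0 otherwise. For n ≥ 0 let T^{⊗n} denote the pointwise tensor power over ℤ, T^{⊗n}(S) = T(S)^{⊗n}, with T^{⊗0} the constant functor with value ℤ. Then: (a) for all integers n > m ≥ 0, every natural transformation T^{⊗n} ⟹ T^{⊗m} is zero; (b) for every n ≥ 1, every natural transformation T^{⊗0} ⟹ T^{⊗n} is zero; and (c) every natural endomorphism of T is multiplication by a unique integer, so that the endomorphism ring of T in the functor category Fun(Γ₊, Ab) is ℤ. -/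
/-!
STATEMENT 11: Let Γ₊ be the category of finite pointed sets and basepoint-preserving maps,
and let T : Γ₊ → Ab be the functor assigning to a pointed set (S, *) the free abelian group
ℤ[S ∖ {*}], with a pointed map f acting by [s] ↦ [f(s)] if f(s) ≠ * and [s] ↦ 0 otherwise.
For n ≥ 0 let T^{⊗n} denote the pointwise tensor power over ℤ (with T^{⊗0} the constant
functor ℤ). Then: (a) for all integers n > m ≥ 0, every natural transformation
T^{⊗n} ⟹ T^{⊗m} is zero; (b) for every n ≥ 1, every natural transformation T^{⊗0} ⟹ T^{⊗n}
is zero; and (c) every natural endomorphism of T is multiplication by a unique integer, so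
that the endomorphism ring of T in Fun(Γ₊, Ab) is ℤ.
-/

open CategoryTheory

attribute [local instance] Classical.propDecidable

/-- The category `Γ₊` of finite pointed sets and basepoint-preserving maps. -/
abbrev GammaPlus := ObjectProperty.FullSubcategory (fun X : Pointed.{0} => Finite X.X)

/-- The underlying abelian group of `T`: the free abelian group `ℤ[S ∖ {*}]`. -/
abbrev TObj (S : GammaPlus) : Type := FreeAbelianGroup { s : S.obj.X // s ≠ S.obj.point }

/-- The action of `T` on morphisms: `[s] ↦ [f(s)]` if `f(s) ≠ *`, and `[s] ↦ 0`
otherwise. -/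
noncomputable def TMap {S S' : GammaPlus} (f : S ⟶ S') : TObj S →+ TObj S' :=
  FreeAbelianGroup.lift fun s =>
    if h : f.hom.toFun s.val = S'.obj.point then 0 else FreeAbelianGroup.of ⟨f.hom.toFun s.val, h⟩

theorem TMap_id (S : GammaPlus) : TMap (𝟙 S) = AddMonoidHom.id (TObj S) := by
  apply FreeAbelianGroup.lift_ext
  intro s
  simp only [TMap, FreeAbelianGroup.lift_apply_of, AddMonoidHom.id_apply]
  exact dif_neg s.property

theorem TMap_comp {S S' S'' : GammaPlus} (f : S ⟶ S') (g : S' ⟶ S'') :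
    TMap (f ≫ g) = (TMap g).comp (TMap f) := by
  apply FreeAbelianGroup.lift_ext
  intro s
  simp only [TMap, FreeAbelianGroup.lift_apply_of, AddMonoidHom.comp_apply]
  by_cases h2 : f.hom.toFun s.val = S'.obj.point
  · have h1 : (f ≫ g).hom.toFun s.val = S''.obj.point := by
      show g.hom.toFun (f.hom.toFun s.val) = _
      rw [h2]; exact g.hom.map_point
    rw [dif_pos h1, dif_pos h2]
    simp
  · rw [dif_neg h2]
    by_cases h1 : (f ≫ g).hom.toFun s.val = S''.obj.point
    · rw [dif_pos h1]
      simp only [FreeAbelianGroup.lift_apply_of]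
      rw [dif_pos (show g.hom.toFun (f.hom.toFun s.val) = S''.obj.point from h1)]
    · rw [dif_neg h1]
      simp only [FreeAbelianGroup.lift_apply_of]
      rw [dif_neg (show ¬ g.hom.toFun (f.hom.toFun s.val) = S''.obj.point from h1)]
      rfl

/-- The functor `T : Γ₊ → Ab`. -/
noncomputable def TFunctor : GammaPlus ⥤ AddCommGrpCat.{0} where
  obj S := AddCommGrpCat.of (TObj S)
  map f := AddCommGrpCat.ofHom (TMap f)
  map_id S := congrArg AddCommGrpCat.ofHom (TMap_id S)
  map_comp f g := congrArg AddCommGrpCat.ofHom (TMap_comp f g)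

/-- The pointwise `n`-th tensor power of `T` over ℤ, at the level of objects:
`T^{⊗0} = ℤ` and `T^{⊗(n+1)} = T^{⊗n} ⊗ T`. -/
noncomputable def tpowGrp (S : GammaPlus) : ℕ → AddCommGrpCat.{0}
  | 0 => AddCommGrpCat.of ℤ
  | (n + 1) => AddCommGrpCat.of (TensorProduct ℤ (tpowGrp S n) (TObj S))

/-- The action of `T^{⊗n}` on morphisms. -/
noncomputable def tpowMap {S S' : GammaPlus} (f : S ⟶ S') :
    ∀ n, (tpowGrp S n : Type) →+ (tpowGrp S' n : Type)
  | 0 => AddMonoidHom.id ℤ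
  | (n + 1) =>
    (TensorProduct.map (tpowMap f n).toIntLinearMap (TMap f).toIntLinearMap).toAddMonoidHom

theorem tpowMap_id (S : GammaPlus) : ∀ n, tpowMap (𝟙 S) n = AddMonoidHom.id _
  | 0 => rfl
  | (n + 1) => by
    show (TensorProduct.map _ _).toAddMonoidHom = _
    rw [tpowMap_id S n, TMap_id]
    refine DFunLike.ext _ _ fun x => ?_
    refine TensorProduct.induction_on x rfl (fun a b => rfl) (fun a b ha hb => ?_)
    simp only [map_add, ha, hb]; exact (map_add _ a b).symm

theorem tpowMap_comp {S S' S'' : GammaPlus} (f : S ⟶ S') (g : S' ⟶ S'') :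
    ∀ n, tpowMap (f ≫ g) n = (tpowMap g n).comp (tpowMap f n)
  | 0 => rfl
  | (n + 1) => by
    show (TensorProduct.map _ _).toAddMonoidHom = _
    rw [tpowMap_comp f g n, TMap_comp]
    refine DFunLike.ext _ _ fun x => ?_
    refine TensorProduct.induction_on x rfl (fun a b => rfl) (fun a b ha hb => ?_)
    simp only [map_add, ha, hb]; exact (map_add _ a b).symm

/-- The pointwise `n`-th tensor power `T^{⊗n} : Γ₊ → Ab` of `T` over ℤ. -/
noncomputable def tpow (n : ℕ) : GammaPlus ⥤ AddCommGrpCat.{0} where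
  obj S := tpowGrp S n
  map f := AddCommGrpCat.ofHom (tpowMap f n)
  map_id S := congrArg AddCommGrpCat.ofHom (tpowMap_id S n)
  map_comp f g := congrArg AddCommGrpCat.ofHom (tpowMap_comp f g n)

/-!
A natural transformation out of `T^{⊗n}` is determined by its value on the element
`e = [0] ⊗ ⋯ ⊗ [n-1]` of `T^{⊗n}(n₊)`, because every basis tensor of `T^{⊗n}(S)` is the image
of `e` under the pointed map `n₊ ⟶ S` classifying it. For `m < n` the value of `η` on `e` is
killed, like `e`, by every map collapsing a single point of `n₊`; but each basis tensor of
`T^{⊗m}(n₊)` misses some point, and collapsing that point fixes it, so every coefficient of the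
value vanishes. For (b) use that `T^{⊗n}(0₊) = 0` when `n ≥ 1`, and for (c) that `T(1₊) = ℤ`.
-/

open Module

abbrev NonBase (S : GammaPlus) : Type := {s : S.obj.X // s ≠ S.obj.point}

theorem FreeAbelianGroup.basis_apply {α : Type*} (a : α) :
    FreeAbelianGroup.basis α a = FreeAbelianGroup.of a := by
  simp [FreeAbelianGroup.basis, Basis.coe_ofRepr, FreeAbelianGroup.equivFinsupp]

theorem FreeAbelianGroup.exists_eq_zsmul_of {α : Type*} [Subsingleton α] (a : α)
    (x : FreeAbelianGroup α) : ∃ k : ℤ, x = k • FreeAbelianGroup.of a := by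
  induction x using FreeAbelianGroup.induction_on with
  | zero => exact ⟨0, (zero_smul ℤ _).symm⟩
  | of b => exact ⟨1, by rw [Subsingleton.elim b a, one_smul]⟩
  | neg b _ => exact ⟨-1, by rw [Subsingleton.elim b a, neg_smul, one_smul]⟩
  | add x y hx hy =>
    obtain ⟨k, rfl⟩ := hx
    obtain ⟨l, rfl⟩ := hy
    exact ⟨k + l, (add_smul k l _).symm⟩

theorem FreeAbelianGroup.zsmul_of_injective {α : Type*} (a : α) :
    Function.Injective fun k : ℤ => k • FreeAbelianGroup.of a := fun k l h => by
  simpa [← FreeAbelianGroup.basis_apply] using congrArg ((FreeAbelianGroup.basis α).coord a) h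

theorem TMap_of {S S' : GammaPlus} (f : S ⟶ S') (s : NonBase S) :
    TMap f (FreeAbelianGroup.of s) = if h : f.hom.toFun s.val = S'.obj.point then 0
      else FreeAbelianGroup.of ⟨f.hom.toFun s.val, h⟩ :=
  FreeAbelianGroup.lift_apply_of _ _

theorem tpowMap_succ_tmul {S S' : GammaPlus} (f : S ⟶ S') (m : ℕ) (x : tpowGrp S m)
    (y : TObj S) :
    tpowMap f (m + 1) (x ⊗ₜ[ℤ] y : TensorProduct ℤ (tpowGrp S m) (TObj S)) =
      (tpowMap f m x ⊗ₜ[ℤ] TMap f y : TensorProduct ℤ (tpowGrp S' m) (TObj S')) :=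
  TensorProduct.map_tmul _ _ x y

/-- `T^{⊗m}(S)` is free on the `m`-tuples of non-basepoint elements of `S`, the basis vector of
`t` being `[t (m-1)] ⊗ ⋯ ⊗ [t 0]` (the last tensor factor comes first in the tuple). -/
noncomputable def tpowBasis (S : GammaPlus) : ∀ m, Basis (Fin m → NonBase S) ℤ (tpowGrp S m)
  | 0 => Basis.singleton _ ℤ
  | m + 1 => ((tpowBasis S m).tensorProduct (FreeAbelianGroup.basis _)).reindex
      ((Equiv.prodComm _ _).trans (Fin.consEquiv fun _ => NonBase S))

theorem tpowBasis_zero (S : GammaPlus) (t : Fin 0 → NonBase S) :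
    tpowBasis S 0 t = (1 : ℤ) :=
  show Basis.singleton (Fin 0 → NonBase S) ℤ t = 1 from Basis.singleton_apply _ _ t

theorem tpowBasis_succ (S : GammaPlus) (m : ℕ) (t : Fin (m + 1) → NonBase S) :
    tpowBasis S (m + 1) t = (tpowBasis S m (Fin.tail t) ⊗ₜ[ℤ] FreeAbelianGroup.of (t 0) :
      TensorProduct ℤ (tpowGrp S m) (TObj S)) := by
  change (((tpowBasis S m).tensorProduct (FreeAbelianGroup.basis _)).reindex
      ((Equiv.prodComm _ _).trans (Fin.consEquiv fun _ => NonBase S)) :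
    Basis _ ℤ (TensorProduct ℤ (tpowGrp S m) (TObj S))) t = _
  rw [Basis.reindex_apply, Basis.tensorProduct_apply', FreeAbelianGroup.basis_apply]
  rfl

theorem tpowMap_tpowBasis {S S' : GammaPlus} (f : S ⟶ S') :
    ∀ {m : ℕ} (t : Fin m → NonBase S) (ht : ∀ j, f.hom.toFun (t j).val ≠ S'.obj.point),
      tpowMap f m (tpowBasis S m t) = tpowBasis S' m fun j => ⟨f.hom.toFun (t j).val, ht j⟩
  | 0, t, _ => by rw [tpowBasis_zero, tpowBasis_zero]; rfl
  | m + 1, t, ht => by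
    rw [tpowBasis_succ, tpowBasis_succ, tpowMap_succ_tmul, TMap_of, dif_neg (ht 0),
      tpowMap_tpowBasis f (Fin.tail t) fun j => ht j.succ]
    rfl

theorem tpowMap_tpowBasis_eq_zero {S S' : GammaPlus} (f : S ⟶ S') :
    ∀ {m : ℕ} (t : Fin m → NonBase S) (j : Fin m), f.hom.toFun (t j).val = S'.obj.point →
      tpowMap f m (tpowBasis S m t) = 0
  | m + 1, t, j, hj => by
    rw [tpowBasis_succ, tpowMap_succ_tmul]
    induction j using Fin.cases with
    | zero => rw [TMap_of, dif_pos hj, TensorProduct.tmul_zero]; rfl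
    | succ j => rw [tpowMap_tpowBasis_eq_zero f (Fin.tail t) j hj, TensorProduct.zero_tmul]; rfl

theorem tpow_natTrans_app_tpowMap {F : GammaPlus ⥤ AddCommGrpCat.{0}} {n : ℕ} (η : tpow n ⟶ F)
    {S S' : GammaPlus} (f : S ⟶ S') (x : tpowGrp S n) :
    η.app S' (tpowMap f n x) = F.map f (η.app S x) :=
  NatTrans.naturality_apply η f x

theorem TFunctor_natTrans_app_TMap {F : GammaPlus ⥤ AddCommGrpCat.{0}} (η : TFunctor ⟶ F)
    {S S' : GammaPlus} (f : S ⟶ S') (x : TObj S) :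
    η.app S' (TMap f x) = F.map f (η.app S x) :=
  NatTrans.naturality_apply η f x

theorem tpowGrp_subsingleton (S : GammaPlus) [IsEmpty (NonBase S)] {m : ℕ} (hm : 0 < m) :
    Subsingleton (tpowGrp S m) :=
  have : IsEmpty (Fin m → NonBase S) := by
    have : Nonempty (Fin m) := ⟨⟨0, hm⟩⟩
    infer_instance
  (tpowBasis S m).repr.toEquiv.subsingleton

noncomputable def collapse {S : GammaPlus} (s : NonBase S) : S ⟶ S :=
  ⟨⟨fun x => if x = s.val then S.obj.point else x, by simp⟩⟩

theorem collapse_apply_self {S : GammaPlus} (s : NonBase S) :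
    (collapse s).hom.toFun s.val = S.obj.point :=
  if_pos rfl

theorem collapse_apply_of_ne {S : GammaPlus} (s : NonBase S) {x : S.obj.X} (hx : x ≠ s.val) :
    (collapse s).hom.toFun x = x :=
  if_neg hx

theorem tpowMap_collapse_tpowBasis {S : GammaPlus} (s : NonBase S) {m : ℕ}
    (t : Fin m → NonBase S) (ht : ∀ j, t j ≠ s) :
    tpowMap (collapse s) m (tpowBasis S m t) = tpowBasis S m t := by
  have hfix (j : Fin m) : (collapse s).hom.toFun (t j).val = (t j).val :=
    collapse_apply_of_ne s fun h => ht j (Subtype.ext h)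
  rw [tpowMap_tpowBasis _ t fun j => by rw [hfix]; exact (t j).2]
  congr 1
  exact funext fun j => Subtype.ext (hfix j)

theorem coord_tpowMap_collapse {S : GammaPlus} (s : NonBase S) {m : ℕ}
    (t : Fin m → NonBase S) (ht : ∀ j, t j ≠ s) (x : tpowGrp S m) :
    (tpowBasis S m).coord t (tpowMap (collapse s) m x) = (tpowBasis S m).coord t x := by
  suffices (tpowBasis S m).coord t ∘ₗ (tpowMap (collapse s) m).toIntLinearMap =
      (tpowBasis S m).coord t from LinearMap.congr_fun this x
  refine (tpowBasis S m).ext fun t' => ?_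
  by_cases h : ∃ j, t' j = s
  · obtain ⟨j, hj⟩ := h
    have hne : t' ≠ t := fun he => ht j (he ▸ hj)
    rw [LinearMap.comp_apply, AddMonoidHom.coe_toIntLinearMap,
      tpowMap_tpowBasis_eq_zero _ t' j (hj ▸ collapse_apply_self s), map_zero,
      Basis.coord_apply, Basis.repr_self, Finsupp.single_eq_of_ne hne.symm]
  · simp only [not_exists] at h
    rw [LinearMap.comp_apply, AddMonoidHom.coe_toIntLinearMap, tpowMap_collapse_tpowBasis s t' h]

theorem eq_zero_of_forall_tpowMap_collapse_eq_zero {S : GammaPlus} {m : ℕ}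
    (hm : m < Nat.card (NonBase S)) (x : tpowGrp S m)
    (hx : ∀ s, tpowMap (collapse s) m x = 0) : x = 0 := by
  refine (tpowBasis S m).forall_coord_eq_zero_iff.mp fun t => ?_
  obtain ⟨s, hs⟩ : ∃ s, ∀ j, t j ≠ s := by
    by_contra! h
    exact (Nat.card_le_card_of_surjective t h).not_gt (by simpa using hm)
  rw [← coord_tpowMap_collapse s t hs, hx s, map_zero]

/-- The standard object `n₊ = {*, 0, …, n-1}`. -/
abbrev stdObj (n : ℕ) : GammaPlus :=
  ⟨⟨Option (Fin n), none⟩, inferInstance⟩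

def stdTuple (n : ℕ) (j : Fin n) : NonBase (stdObj n) :=
  ⟨some j, Option.some_ne_none j⟩

theorem stdTuple_bijective (n : ℕ) : Function.Bijective (stdTuple n) := by
  refine ⟨fun i j h => Option.some_injective _ (congrArg Subtype.val h), ?_⟩
  rintro ⟨_ | j, hj⟩
  · exact absurd rfl hj
  · exact ⟨j, rfl⟩

instance isEmpty_nonBase_stdObj_zero : IsEmpty (NonBase (stdObj 0)) :=
  ⟨fun s => ((stdTuple_bijective 0).surjective s).choose.elim0⟩

instance subsingleton_nonBase_stdObj_one : Subsingleton (NonBase (stdObj 1)) :=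
  (stdTuple_bijective 1).surjective.subsingleton

theorem card_nonBase_stdObj (n : ℕ) : Nat.card (NonBase (stdObj n)) = n := by
  rw [← Nat.card_eq_of_bijective _ (stdTuple_bijective n), Nat.card_fin]

def tupleMap {S : GammaPlus} {n : ℕ} (t : Fin n → NonBase S) : stdObj n ⟶ S :=
  ⟨⟨fun o => o.elim S.obj.point fun j => (t j).val, rfl⟩⟩

theorem tpowMap_tupleMap {S : GammaPlus} {n : ℕ} (t : Fin n → NonBase S) :
    tpowMap (tupleMap t) n (tpowBasis _ n (stdTuple n)) = tpowBasis S n t :=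
  tpowMap_tpowBasis _ _ fun j => (t j).2

theorem tpow_natTrans_ext {F : GammaPlus ⥤ AddCommGrpCat.{0}} {n : ℕ} {α β : tpow n ⟶ F}
    (h : α.app (stdObj n) (tpowBasis _ n (stdTuple n)) =
      β.app (stdObj n) (tpowBasis _ n (stdTuple n))) : α = β := by
  ext S : 2
  refine AddCommGrpCat.hom_ext (AddMonoidHom.toIntLinearMap_injective ?_)
  refine (tpowBasis S n).ext fun t => ?_
  change α.app S (tpowBasis S n t) = β.app S (tpowBasis S n t)
  rw [← tpowMap_tupleMap t, tpow_natTrans_app_tpowMap, tpow_natTrans_app_tpowMap, h]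

theorem TFunctor_natTrans_ext {F : GammaPlus ⥤ AddCommGrpCat.{0}} {α β : TFunctor ⟶ F}
    (h : α.app (stdObj 1) (FreeAbelianGroup.of (stdTuple 1 0)) =
      β.app (stdObj 1) (FreeAbelianGroup.of (stdTuple 1 0))) : α = β := by
  ext S : 2
  refine AddCommGrpCat.hom_ext (FreeAbelianGroup.lift_ext _ _ fun s => ?_)
  have hs : TMap (tupleMap fun _ : Fin 1 => s) (FreeAbelianGroup.of (stdTuple 1 0)) =
      FreeAbelianGroup.of s := by
    have hne : (tupleMap fun _ : Fin 1 => s).hom.toFun (stdTuple 1 0).val ≠ S.obj.point := s.2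
    rw [TMap_of, dif_neg hne]
    rfl
  change α.app S (FreeAbelianGroup.of s) = β.app S (FreeAbelianGroup.of s)
  rw [← hs, TFunctor_natTrans_app_TMap, TFunctor_natTrans_app_TMap, h]

theorem tpow_natTrans_eq_zero_of_lt {n m : ℕ} (hmn : m < n) (η : tpow n ⟶ tpow m) : η = 0 := by
  have hη : η.app (stdObj n) (tpowBasis _ n (stdTuple n)) = 0 := by
    refine eq_zero_of_forall_tpowMap_collapse_eq_zero (by rwa [card_nonBase_stdObj]) _ fun s => ?_
    obtain ⟨j, rfl⟩ := (stdTuple_bijective n).surjective s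
    have hkill : (tpow n).map (collapse (stdTuple n j)) (tpowBasis _ n (stdTuple n)) = 0 :=
      tpowMap_tpowBasis_eq_zero _ _ j (collapse_apply_self _)
    exact (NatTrans.naturality_apply η _ _).symm.trans
      ((congrArg (η.app _) hkill).trans (map_zero _))
  exact tpow_natTrans_ext (hη.trans rfl)

theorem tpow_zero_natTrans_eq_zero {n : ℕ} (hn : 0 < n) (η : tpow 0 ⟶ tpow n) : η = 0 :=
  have : Subsingleton ((tpow n).obj (stdObj 0)) := tpowGrp_subsingleton _ hn
  tpow_natTrans_ext (Subsingleton.elim _ _)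

theorem TFunctor_zsmul_id_app_apply (k : ℤ) (S : GammaPlus) (x : TObj S) :
    (k • 𝟙 TFunctor).app S x = k • x := by
  rw [NatTrans.app_zsmul, NatTrans.id_app]
  rfl

theorem TFunctor_natTrans_existsUnique_zsmul (η : TFunctor ⟶ TFunctor) :
    ∃! k : ℤ, η = k • 𝟙 TFunctor := by
  obtain ⟨k, hk⟩ := FreeAbelianGroup.exists_eq_zsmul_of (stdTuple 1 0)
    (η.app (stdObj 1) (FreeAbelianGroup.of (stdTuple 1 0)))
  refine ⟨k, TFunctor_natTrans_ext ?_, fun l hl => ?_⟩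
  · rw [hk, TFunctor_zsmul_id_app_apply]
  · rw [hl, TFunctor_zsmul_id_app_apply] at hk
    exact FreeAbelianGroup.zsmul_of_injective _ hk

theorem stmt11 :
    -- (a) for all `n > m ≥ 0`, every natural transformation `T^{⊗n} ⟹ T^{⊗m}` is zero:
    (∀ n m : ℕ, m < n → ∀ η : tpow n ⟶ tpow m, η = 0) ∧
    -- (b) for every `n ≥ 1`, every natural transformation `T^{⊗0} ⟹ T^{⊗n}` is zero:
    (∀ n : ℕ, 1 ≤ n → ∀ η : tpow 0 ⟶ tpow n, η = 0) ∧
    -- (c) every natural endomorphism of `T` is multiplication by a unique integer: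
    (∀ η : TFunctor ⟶ TFunctor, ∃! k : ℤ, η = k • 𝟙 TFunctor) :=
  ⟨fun _ _ hmn => tpow_natTrans_eq_zero_of_lt hmn, fun _ hn => tpow_zero_natTrans_eq_zero hn,
    TFunctor_natTrans_existsUnique_zsmul⟩
end

section
/- Let G be a finite group, let ℤ denote the trivial ℤ[G]-module, and for a subgroup H ≤ G let ℤ[G/H] denote the permutation ℤ[G]-module on the left cosets of H. Then: (a) if the order of G is divisible by at least two distinct primes, there exist proper subgroups H₁, …, H_k of G (Sylow subgroups suffice) and ℤ[G]-module homomorphisms u : ℤ → ℤ[G/H₁] ⊕ ⋯ ⊕ ℤ[G/H_k] and v : ℤ[G/H₁] ⊕ ⋯ ⊕ ℤ[G/H_k] → ℤ with v ∘ u = id; and (b) if G is a nontrivial p-group for a prime p, then for any proper subgroups H₁, …, H_k of G and any ℤ[G]-module homomorphisms u : ℤ → ℤ[G/H₁] ⊕ ⋯ ⊕ ℤ[G/H_k] and v : ℤ[G/H₁] ⊕ ⋯ ⊕ ℤ[G/H_k] → ℤ, the composite v ∘ u : ℤ → ℤ is multiplication by an integer divisible by p. -/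
/-!
STATEMENT 14: Let G be a finite group, ℤ the trivial ℤ[G]-module, and for H ≤ G let
ℤ[G/H] be the permutation ℤ[G]-module on the left cosets of H. Then:
(a) if the order of G is divisible by at least two distinct primes, there exist proper
subgroups H₁, …, H_k of G and ℤ[G]-module homomorphisms u : ℤ → ℤ[G/H₁] ⊕ ⋯ ⊕ ℤ[G/H_k]
and v : ℤ[G/H₁] ⊕ ⋯ ⊕ ℤ[G/H_k] → ℤ with v ∘ u = id; and
(b) if G is a nontrivial p-group for a prime p, then for any proper subgroups H₁, …, H_k
and any ℤ[G]-module homomorphisms u, v as above, the composite v ∘ u : ℤ → ℤ is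
multiplication by an integer divisible by p.

Implementation notes: `ℤ[G/H]` is `(G ⧸ H) →₀ ℤ` with `G` acting by translation on the
domain (`Finsupp.comapDistribMulAction`); a ℤ[G]-module homomorphism between permutation
modules (resp. to or from the trivial module ℤ) is an additive map which is G-equivariant.
An additive map `u : ℤ → ⊕_j ℤ[G/H_j]` (resp. `v : ⊕_j ℤ[G/H_j] → ℤ`) is the same thing
as the family of its components `u_j : ℤ → ℤ[G/H_j]` (resp. `v_j : ℤ[G/H_j] → ℤ`), and is
determined by the element `u 1` (being additive with domain ℤ); the composite `v ∘ u` is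
multiplication by the integer `∑ j, v_j (u_j 1)`, so `v ∘ u = id` reads
`∑ j, v_j (u_j 1) = 1`, and `p ∣ (v ∘ u)` reads `p ∣ ∑ j, v_j (u_j 1)`.
-/

attribute [local instance] Finsupp.comapSMul Finsupp.comapMulAction
  Finsupp.comapDistribMulAction

universe u

/-!
A `G`-map `ℤ → ℤ[X]` picks an invariant vector, which is constant on the transitive `G`-set `X`,
and a `G`-map `ℤ[X] → ℤ` takes the same value on every basis vector; so their composite is
multiplication by a multiple of `|X|`, and the norm map followed by the augmentation realizes
exactly `|X|`. For `X = G ⧸ H` with `H` proper in a `p`-group, `p ∣ [G : H]`. If `|G|` has two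
prime factors, every Sylow subgroup is proper and the Sylow indices are coprime, so Bézout
combines the composites `c_r [G : P_r]` into `1`.
-/

open Finsupp MulAction

section PermutationModule

variable {G X : Type*} [Group G] [MulAction G X]

variable (G) in
theorem Finsupp.exists_invariant_homs_comp_eq_card_mul [Finite X] (c : ℤ) :
    ∃ (u : ℤ →+ (X →₀ ℤ)) (v : (X →₀ ℤ) →+ ℤ), (∀ (g : G) (n : ℤ), g • u n = u n) ∧
      (∀ (g : G) (f : X →₀ ℤ), v (g • f) = v f) ∧ v (u 1) = Nat.card X * c := by
  have := Fintype.ofFinite X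
  set N : X →₀ ℤ := equivFunOnFinite.symm 1
  have hN : ∀ g : G, g • N = N := fun g => by ext; simp [N]
  refine ⟨zmultiplesHom _ (c • N), ∑ x, applyAddHom x, fun g n => ?_, fun g f => ?_, ?_⟩
  · simp only [zmultiplesHom_apply, smul_comm g, hN]
  · simp only [AddMonoidHom.finsetSum_apply, applyAddHom_apply, comapSMul_apply]
    exact Equiv.sum_comp (toPerm g⁻¹) f
  · simp [N, Nat.card_eq_fintype_card]

variable [IsPretransitive G X]

theorem Finsupp.apply_eq_apply_of_forall_smul_eq {M : Type*} [AddCommMonoid M] {f : X →₀ M}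
    (hf : ∀ g : G, g • f = f) (x y : X) : f x = f y := by
  obtain ⟨g, rfl⟩ := exists_smul_eq G y x
  have := DFunLike.congr_fun (hf g) (g • y)
  rwa [comapSMul_apply, inv_smul_smul, eq_comm] at this

theorem Finsupp.map_single_eq_of_forall_smul {M N : Type*} [AddCommMonoid M] [AddCommMonoid N]
    {v : (X →₀ M) →+ N} (hv : ∀ (g : G) (f : X →₀ M), v (g • f) = v f) (x y : X) (m : M) :
    v (single x m) = v (single y m) := by
  obtain ⟨g, rfl⟩ := exists_smul_eq G y x
  rw [← comapSMul_single, hv]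

theorem Finsupp.map_eq_card_mul_of_forall_smul [Finite X] {f : X →₀ ℤ}
    (hf : ∀ g : G, g • f = f) {v : (X →₀ ℤ) →+ ℤ}
    (hv : ∀ (g : G) (f : X →₀ ℤ), v (g • f) = v f) (x₀ : X) :
    v f = Nat.card X * (f x₀ * v (single x₀ 1)) := by
  have := Fintype.ofFinite X
  calc v f = ∑ x, v (single x (f x)) := by rw [← map_sum, univ_sum_single]
    _ = ∑ _x : X, f x₀ * v (single x₀ 1) := by
      refine Finset.sum_congr rfl fun x _ => ?_
      rw [apply_eq_apply_of_forall_smul_eq hf x x₀, map_single_eq_of_forall_smul hv x x₀,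
        ← smul_single_one, map_zsmul, smul_eq_mul]
    _ = Nat.card X * (f x₀ * v (single x₀ 1)) := by
      rw [Finset.sum_const, Finset.card_univ, nsmul_eq_mul, Nat.card_eq_fintype_card]

theorem Finsupp.card_dvd_map_of_forall_smul [Finite X] {f : X →₀ ℤ}
    (hf : ∀ g : G, g • f = f) {v : (X →₀ ℤ) →+ ℤ}
    (hv : ∀ (g : G) (f : X →₀ ℤ), v (g • f) = v f) : (Nat.card X : ℤ) ∣ v f := by
  rcases isEmpty_or_nonempty X with hX | ⟨⟨x₀⟩⟩
  · simp [Subsingleton.elim f 0]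
  · exact ⟨_, map_eq_card_mul_of_forall_smul hf hv x₀⟩

end PermutationModule

theorem Int.exists_sum_mul_eq_one_of_forall_prime {ι : Type*} (s : Finset ι) (n : ι → ℤ)
    (h : ∀ q : ℕ, q.Prime → ∃ i ∈ s, ¬ (q : ℤ) ∣ n i) : ∃ c : ι → ℤ, ∑ i ∈ s, n i * c i = 1 := by
  obtain ⟨c, hc⟩ := s.gcd_eq_sum_mul n
  refine ⟨c, hc ▸ ?_⟩
  have hnonneg : 0 ≤ s.gcd n := Int.nonneg_of_normalize_eq_self Finset.normalize_gcd
  have hnatAbs : (s.gcd n).natAbs = 1 := by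
    by_contra hne
    obtain ⟨q, hq, hqd⟩ := Nat.exists_prime_and_dvd hne
    obtain ⟨i, hi, hqi⟩ := h q hq
    exact hqi ((Int.natCast_dvd.mpr hqd).trans (Finset.gcd_dvd hi))
  omega

section Sylow

variable {G : Type*} [Group G] [Finite G]

theorem IsPGroup.eq_of_prime_dvd_card {p q : ℕ} (hG : IsPGroup p G) (hp : p.Prime)
    (hq : q.Prime) (hqG : q ∣ Nat.card G) : q = p := by
  have := (isPGroup_iff_primeFactors_card_subset hp.ne_zero).mp hG
    (Nat.mem_primeFactors.mpr ⟨hq, hqG, Nat.card_pos.ne'⟩)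
  rwa [hp.primeFactors, Finset.mem_singleton] at this

theorem IsPGroup.prime_dvd_index_of_ne_top {p : ℕ} [Fact p.Prime] (hG : IsPGroup p G)
    {H : Subgroup G} (hH : H ≠ ⊤) : p ∣ H.index := by
  obtain ⟨n, hn⟩ := hG.index H
  have hn0 : n ≠ 0 := by
    rintro rfl
    exact hH (Subgroup.index_eq_one.mp (by rw [hn, pow_zero]))
  rw [hn]
  exact dvd_pow_self p hn0

theorem Sylow.coe_ne_top_of_ne_of_dvd_card {r p q : ℕ} (P : Sylow r G) (hr : r.Prime)
    (hp : p.Prime) (hq : q.Prime) (hpq : p ≠ q) (hpG : p ∣ Nat.card G)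
    (hqG : q ∣ Nat.card G) : (P : Subgroup G) ≠ ⊤ := by
  intro hP
  have hG : IsPGroup r G := (hP ▸ P.isPGroup').of_equiv Subgroup.topEquiv
  exact hpq ((hG.eq_of_prime_dvd_card hr hp hpG).trans (hG.eq_of_prime_dvd_card hr hq hqG).symm)

theorem Sylow.exists_sum_mul_index_eq_one (P : ∀ r, Sylow r G) (hG : Nat.card G ≠ 1) :
    ∃ c : ℕ → ℤ, ∑ r ∈ (Nat.card G).primeFactors, ((P r : Subgroup G).index : ℤ) * c r = 1 := by
  refine Int.exists_sum_mul_eq_one_of_forall_prime _ _ fun t ht => ?_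
  have : Fact t.Prime := ⟨ht⟩
  by_cases htG : t ∣ Nat.card G
  · exact ⟨t, Nat.mem_primeFactors.mpr ⟨ht, htG, Nat.card_pos.ne'⟩,
      Int.natCast_dvd_natCast.not.mpr (P t).not_dvd_index⟩
  · obtain ⟨r, hr, hrG⟩ := Nat.exists_prime_and_dvd hG
    exact ⟨r, Nat.mem_primeFactors.mpr ⟨hr, hrG, Nat.card_pos.ne'⟩,
      fun h => htG ((Int.natCast_dvd_natCast.mp h).trans (Subgroup.index_dvd_card _))⟩

end Sylow

theorem stmt14 (G : Type u) [Group G] [Finite G] :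
    -- (a) if `|G|` is divisible by two distinct primes:
    ((∃ p q : ℕ, p.Prime ∧ q.Prime ∧ p ≠ q ∧ p ∣ Nat.card G ∧ q ∣ Nat.card G) →
      ∃ (k : ℕ) (H : Fin k → Subgroup G), (∀ j, H j ≠ ⊤) ∧
        ∃ (u : ∀ j : Fin k, ℤ →+ ((G ⧸ H j) →₀ ℤ))
          (v : ∀ j : Fin k, ((G ⧸ H j) →₀ ℤ) →+ ℤ),
          -- `u` is G-equivariant (ℤ carries the trivial action):
          (∀ (j : Fin k) (g : G) (n : ℤ), g • u j n = u j n) ∧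
          -- `v` is G-equivariant:
          (∀ (j : Fin k) (g : G) (x : (G ⧸ H j) →₀ ℤ), v j (g • x) = v j x) ∧
          -- `v ∘ u = id`:
          (∑ j : Fin k, v j (u j 1)) = 1) ∧
    -- (b) if `G` is a nontrivial `p`-group:
    (∀ p : ℕ, p.Prime → IsPGroup p G → Nontrivial G →
      ∀ (k : ℕ) (H : Fin k → Subgroup G), (∀ j, H j ≠ ⊤) →
        ∀ (u : ∀ j : Fin k, ℤ →+ ((G ⧸ H j) →₀ ℤ))
          (v : ∀ j : Fin k, ((G ⧸ H j) →₀ ℤ) →+ ℤ),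
          (∀ (j : Fin k) (g : G) (n : ℤ), g • u j n = u j n) →
          (∀ (j : Fin k) (g : G) (x : (G ⧸ H j) →₀ ℤ), v j (g • x) = v j x) →
          -- the composite `v ∘ u` is multiplication by an integer divisible by `p`:
          (p : ℤ) ∣ ∑ j : Fin k, v j (u j 1)) := by
  refine ⟨fun ⟨p, q, hp, hq, hpq, hpG, hqG⟩ => ?_, fun p hp hG _ k H hH u v hu hv => ?_⟩
  · set S := (Nat.card G).primeFactors
    let P : ∀ r, Sylow r G := fun _ => Classical.arbitrary _
    let r : Fin S.card → ℕ := fun j => S.equivFin.symm j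
    obtain ⟨c, hc⟩ := Sylow.exists_sum_mul_index_eq_one P
      fun h => hp.one_lt.ne' (Nat.dvd_one.mp (h ▸ hpG))
    choose u v hu hv huv using fun j =>
      exists_invariant_homs_comp_eq_card_mul G (X := G ⧸ (P (r j) : Subgroup G)) (c (r j))
    refine ⟨S.card, fun j => P (r j), fun j => (P (r j)).coe_ne_top_of_ne_of_dvd_card
      (Nat.prime_of_mem_primeFactors (S.equivFin.symm j).2) hp hq hpq hpG hqG, u, v, hu, hv, ?_⟩
    simp only [huv]
    rw [← hc, ← S.sum_coe_sort, ← S.equivFin.symm.sum_comp]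
    rfl
  · have := Fact.mk hp
    exact Finset.dvd_sum fun j _ =>
      (Int.natCast_dvd_natCast.mpr (hG.prime_dvd_index_of_ne_top (hH j))).trans
        (card_dvd_map_of_forall_smul (fun g => hu j g 1) (hv j))
end
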